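/- Let K be a linear connection on TE → E and g a pseudo-Riemannian metric. Then the following are equivalent: (1) L[K] g^♭ = 0; (2) d_K g = 0; (3) dΥ[g,K] = 0; (4) [Λ[g,K], Λ[g,K]] = 0 (Schouten bracket). -/

import Mathlib

open scoped BigOperators

/-- Base coordinates of a chart of the manifold `E`. -/
abbrev Base (n : ℕ) := Fin n → ℝ

/-- Induced coordinates `(x, ẋ)` on the tangent bundle `TE`;
also used for tangent vectors of `TE` (horizontal and vertical components). -/
abbrev TE (n : ℕ) := (Fin n → ℝ) × (Fin n → ℝ)

/-- Partial derivative `∂_i` on the base. -/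
noncomputable def pdB {n : ℕ} (f : Base n → ℝ) (i : Fin n) (x : Base n) : ℝ :=
  fderiv ℝ f x (Pi.single i 1)

/-- Partial derivative `∂_i` on `TE`. -/
noncomputable def pdT {n : ℕ} (f : TE n → ℝ) (i : Fin n) (p : TE n) : ℝ :=
  fderiv ℝ f p (Pi.single i 1, 0)

/-- Fibre partial derivative `∂̇_i` on `TE`. -/
noncomputable def vdT {n : ℕ} (f : TE n → ℝ) (i : Fin n) (p : TE n) : ℝ :=
  fderiv ℝ f p (0, Pi.single i 1)

/-- An `r`-form on `TE`, given by its value on `r`-tuples of (constant-coefficient)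
tangent vectors of `TE` at each point. -/
def Form (n r : ℕ) := TE n → (Fin r → TE n) → ℝ

/-- Exterior differential in coordinates. -/
noncomputable def extd {n r : ℕ} (f : Form n r) : Form n (r+1) :=
  fun p v => ∑ i : Fin (r+1),
    (-1 : ℝ) ^ (i : ℕ) * fderiv ℝ (fun q => f q (v ∘ i.succAbove)) p (v i)

/-- Insertion operator `i(K)` of a tangent-valued 1-form `Kv` (given as a map sending a
tangent vector of `TE` to a tangent vector of `TE`, pointwise) on forms. -/
noncomputable def insK {n : ℕ} (Kv : TE n → TE n → TE n) :
    {r : ℕ} → Form n r → Form n r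
  | 0, _ => fun _ _ => 0
  | (r+1), f => fun p v =>
      ∑ j : Fin (r+1), (-1 : ℝ) ^ (j : ℕ) * f p (Fin.cons (Kv p (v j)) (v ∘ j.succAbove))

/-- The Frölicher–Nijenhuis Lie derivative `L[K] = i(K)∘d − d∘i(K)` of forms along a
tangent-valued 1-form. -/
noncomputable def lieK {n r : ℕ} (Kv : TE n → TE n → TE n) (f : Form n r) :
    Form n (r+1) :=
  fun p v => insK Kv (extd f) p v - extd (insK Kv f) p v

/-- The tangent-valued 1-form `K = dˡ ⊗ (∂_l + K_l^m ∂̇_m)` associated with a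
(possibly nonlinear) connection with Christoffel symbols `K : TE n → Fin n → Fin n → ℝ`. -/
noncomputable def horK {n : ℕ} (K : TE n → Fin n → Fin n → ℝ) : TE n → TE n → TE n :=
  fun p w => (w.1, fun b => ∑ a, w.1 a * K p a b)

/-- The Christoffel symbols `K_a^b = Γ_a^b{}_c(x) ẋ^c` of a linear connection. -/
noncomputable def linK {n : ℕ} (G : Base n → Fin n → Fin n → Fin n → ℝ) :
    TE n → Fin n → Fin n → ℝ :=
  fun p a b => ∑ c, G p.1 a b c * p.2 c

/-- The 1-form `g♭ = g_{ab} ẋ^a d^b` on `TE`. -/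
noncomputable def gflat {n : ℕ} (g : Base n → Fin n → Fin n → ℝ) : Form n 1 :=
  fun p v => ∑ a, ∑ b, g p.1 a b * p.2 a * (v 0).1 b

/-- Ordinary Lie derivative of a form on `TE` along a vector field `W` on `TE`. -/
noncomputable def lieV {n r : ℕ} (W : TE n → TE n) (f : Form n r) : Form n r :=
  fun p v => fderiv ℝ (fun q => f q v) p (W p)
    + ∑ i, f p (Function.update v i (fderiv ℝ W p (v i)))

/-- The Liouville vector field `I = ẋ^a ∂̇_a` on `TE`. -/
def liou {n : ℕ} : TE n → TE n := fun p => (0, p.2)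

/-- The linear horizontal `r`-form `φ = c_{e l₁…l_r}(x) ẋ^e d^{l₁}∧…∧d^{l_r}` on `TE`
with coefficients `c`. -/
noncomputable def linHorForm {n r : ℕ} (c : Base n → Fin n → (Fin r → Fin n) → ℝ) :
    Form n r :=
  fun p v => ∑ e, ∑ l : Fin r → Fin n,
    c p.1 e l * p.2 e * Matrix.det (Matrix.of fun i j => (v i).1 (l j))

/-- The 2-form `Υ[g,K] = g_{ab}(ḋ^a − K_c^a d^c) ∧ d^b` on `TE`. -/
noncomputable def UpsG {n : ℕ} (g : Base n → Fin n → Fin n → ℝ)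
    (K : TE n → Fin n → Fin n → ℝ) : Form n 2 :=
  fun p v => ∑ a, ∑ b, g p.1 a b *
    (((v 0).2 a - ∑ c, K p c a * (v 0).1 c) * (v 1).1 b
      - ((v 1).2 a - ∑ c, K p c a * (v 1).1 c) * (v 0).1 b)

/-- The curvature components `R[K]_{ab}^e = −2(∂_a K_b^e + K_a^s ∂̇_s K_b^e)`. -/
noncomputable def RawR {n : ℕ} (K : TE n → Fin n → Fin n → ℝ)
    (p : TE n) (a b e : Fin n) : ℝ :=
  -2 * (pdT (fun q => K q b e) a p + ∑ s, K p a s * vdT (fun q => K q b e) s p)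

/-- The lowered curvature components `R[K]_{abe} = g_{ce} R[K]_{ab}^c`. -/
noncomputable def Rlow {n : ℕ} (g : Base n → Fin n → Fin n → ℝ)
    (K : TE n → Fin n → Fin n → ℝ) (p : TE n) (a b e : Fin n) : ℝ :=
  ∑ c, g p.1 c e * RawR K p a b c

/-- Index set for the coordinates `(x^a, ẋ^a)` of `TE`. -/
abbrev Idx (n : ℕ) := Fin n ⊕ Fin n

/-- Coordinate derivative on `TE` in the direction labelled by `A : Idx n`
(`∂_a` for `inl a`, `∂̇_a` for `inr a`). -/
noncomputable def DT {n : ℕ} (A : Idx n) (f : TE n → ℝ) (p : TE n) : ℝ :=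
  match A with
  | .inl a => pdT f a p
  | .inr a => vdT f a p

/-- Components of the horizontal vector field `∂_a + K_a^c ∂̇_c` on `TE`. -/
def Xcomp {n : ℕ} (K : TE n → Fin n → Fin n → ℝ) (p : TE n) (a : Fin n) :
    Idx n → ℝ :=
  fun A => match A with
  | .inl c => if c = a then 1 else 0
  | .inr c => K p a c

/-- Components of the vertical vector field `∂̇_b` on `TE`. -/
def Ycomp {n : ℕ} (b : Fin n) : Idx n → ℝ :=
  fun A => match A with
  | .inl _ => 0
  | .inr c => if c = b then 1 else 0

/-- Components of the 2-vector `Λ[g,K] = g^{ab}(∂_a + K_a^c ∂̇_c) ∧ ∂̇_b` on `TE`. -/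
noncomputable def Lam {n : ℕ} (ginv : Base n → Fin n → Fin n → ℝ)
    (K : TE n → Fin n → Fin n → ℝ) (p : TE n) (A B : Idx n) : ℝ :=
  ∑ a, ∑ b, ginv p.1 a b * (Xcomp K p a A * Ycomp b B - Xcomp K p a B * Ycomp b A)

/-- Components of the Schouten–Nijenhuis bracket `[L,L]` of a 2-vector `L` on `TE`:
`[L,L]^{ABC} = 2 Σ_D (L^{DA} ∂_D L^{BC} + L^{DB} ∂_D L^{CA} + L^{DC} ∂_D L^{AB})`. -/
noncomputable def SB {n : ℕ} (L : TE n → Idx n → Idx n → ℝ)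
    (p : TE n) (A B C : Idx n) : ℝ :=
  2 * ∑ D : Idx n,
    (L p D A * DT D (fun q => L q B C) p
      + L p D B * DT D (fun q => L q C A) p
      + L p D C * DT D (fun q => L q A B) p)

/-- The raised curvature components `R[K]^{abe} = g^{ac} g^{bs} R[K]_{cs}^e`. -/
noncomputable def Rup {n : ℕ} (ginv : Base n → Fin n → Fin n → ℝ)
    (K : TE n → Fin n → Fin n → ℝ) (p : TE n) (a b e : Fin n) : ℝ :=
  ∑ c, ∑ s, ginv p.1 a c * ginv p.1 b s * RawR K p c s e


/-! ### Auxiliary material -/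

namespace Stmt13Aux

variable {n : ℕ}

/-- Basis tangent vectors of `TE n` indexed by `Idx n`. -/
noncomputable def bas : Idx n → TE n
  | .inl a => (Pi.single a 1, 0)
  | .inr a => (0, Pi.single a 1)

/-- Components of a tangent vector. -/
def cmp (u : TE n) : Idx n → ℝ
  | .inl a => u.1 a
  | .inr a => u.2 a

lemma DT_eq_fderiv (A : Idx n) (F : TE n → ℝ) (p : TE n) :
    DT A F p = fderiv ℝ F p (bas A) := by
  cases A <;> rfl

lemma cmp_bas (A B : Idx n) : cmp (bas A) B = if B = A then 1 else 0 := by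
  cases A <;> cases B <;>
    simp [bas, cmp, Pi.single_apply, Sum.inl.injEq, Sum.inr.injEq]

lemma pi_expand (w : Fin n → ℝ) : ∑ a, w a • (Pi.single a 1 : Fin n → ℝ) = w := by
  rw [← Finset.univ_sum_single w]
  exact Finset.sum_congr rfl fun a _ => by ext j; simp [Pi.single_apply]

lemma sum_cmp_bas (u : TE n) : ∑ A : Idx n, cmp u A • bas A = u := by
  rw [Fintype.sum_sum_type]
  apply Prod.ext <;> simp [bas, cmp, Prod.fst_sum, Prod.snd_sum, pi_expand]

/-- Directional derivative expansion on `TE`. -/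
lemma fderiv_expand {F : TE n → ℝ} {p : TE n} (hF : DifferentiableAt ℝ F p) (u : TE n) :
    fderiv ℝ F p u = ∑ A : Idx n, cmp u A * DT A F p := by
  conv_lhs => rw [← sum_cmp_bas u, map_sum]
  exact Finset.sum_congr rfl fun A _ => by
    rw [map_smul, DT_eq_fderiv]; rfl

/-- Directional derivative expansion on the base. -/
lemma fderiv_expandB {h : Base n → ℝ} {x : Base n} (hh : DifferentiableAt ℝ h x)
    (w : Base n) : fderiv ℝ h x w = ∑ a, w a * pdB h a x := by
  conv_lhs => rw [← pi_expand w, map_sum]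
  exact Finset.sum_congr rfl fun a _ => by rw [map_smul]; rfl

lemma fderiv_base {h : Base n → ℝ} {p : TE n} (hh : DifferentiableAt ℝ h p.1) (z : TE n) :
    fderiv ℝ (fun q : TE n => h q.1) p z = fderiv ℝ h p.1 z.1 := by
  have e : (fun q : TE n => h q.1) = h ∘ Prod.fst := rfl
  rw [e, fderiv_comp p hh differentiableAt_fst, fderiv_fst]; rfl

lemma fderiv_snda (a : Fin n) (p z : TE n) :
    fderiv ℝ (fun q : TE n => q.2 a) p z = z.2 a := by
  have h : (fun q : TE n => q.2 a) = ⇑((ContinuousLinearMap.proj (R := ℝ)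
      (φ := fun _ : Fin n => ℝ) a).comp
      (ContinuousLinearMap.snd ℝ (Fin n → ℝ) (Fin n → ℝ))) := rfl
  rw [h, ContinuousLinearMap.fderiv]; rfl

lemma fderiv_mul_apply {F G : TE n → ℝ} {p : TE n} (hF : DifferentiableAt ℝ F p)
    (hG : DifferentiableAt ℝ G p) (z : TE n) :
    fderiv ℝ (fun q => F q * G q) p z = F p * fderiv ℝ G p z + G p * fderiv ℝ F p z := by
  rw [fderiv_fun_mul hF hG]; simp

lemma fderiv_sum_apply' {ι : Type*} (s : Finset ι) {A : ι → TE n → ℝ} {p : TE n}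
    (hA : ∀ i ∈ s, DifferentiableAt ℝ (A i) p) (z : TE n) :
    fderiv ℝ (fun q => ∑ i ∈ s, A i q) p z = ∑ i ∈ s, fderiv ℝ (A i) p z := by
  rw [fderiv_fun_sum hA]; simp

lemma fderiv_sub_apply' {F G : TE n → ℝ} {p : TE n} (hF : DifferentiableAt ℝ F p)
    (hG : DifferentiableAt ℝ G p) (z : TE n) :
    fderiv ℝ (fun q => F q - G q) p z = fderiv ℝ F p z - fderiv ℝ G p z := by
  rw [fderiv_fun_sub hF hG]; rfl

lemma fderiv_const_apply (c : ℝ) (p z : TE n) :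
    fderiv ℝ (fun _ : TE n => c) p z = 0 := by
  rw [fderiv_fun_const]; rfl

/-! ### Smoothness -/

lemma smBase {h : Base n → ℝ} (hh : ContDiff ℝ (⊤ : ℕ∞) h) :
    ContDiff ℝ (⊤ : ℕ∞) (fun q : TE n => h q.1) := hh.comp contDiff_fst

lemma smSnda (a : Fin n) : ContDiff ℝ (⊤ : ℕ∞) (fun q : TE n => q.2 a) :=
  ((ContinuousLinearMap.proj (R := ℝ) (φ := fun _ : Fin n => ℝ) a).comp
      (ContinuousLinearMap.snd ℝ (Fin n → ℝ) (Fin n → ℝ))).contDiff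

end Stmt13Aux

namespace Stmt13Aux
section
variable {n : ℕ} (g ginv : Base n → Fin n → Fin n → ℝ)
  (G : Base n → Fin n → Fin n → Fin n → ℝ)

lemma smLinK (hG : ∀ a b d, ContDiff ℝ (⊤ : ℕ∞) (fun x => G x a b d)) (a b : Fin n) :
    ContDiff ℝ (⊤ : ℕ∞) (fun q => linK G q a b) := by
  unfold linK
  exact ContDiff.sum fun c _ => (smBase (hG a b c)).mul (smSnda c)

lemma smFu (hg : ∀ a b, ContDiff ℝ (⊤ : ℕ∞) (fun x => g x a b)) (u : TE n) :
    ContDiff ℝ (⊤ : ℕ∞) (fun q : TE n => gflat g q (fun _ => u)) := by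
  unfold gflat
  exact ContDiff.sum fun a _ => ContDiff.sum fun b _ =>
    ((smBase (hg a b)).mul (smSnda a)).mul contDiff_const

/-- `Υ` evaluated on basis vectors. -/
noncomputable def Uc (q : TE n) (B C : Idx n) : ℝ :=
  UpsG g (linK G) q ![bas B, bas C]

variable {g ginv G}

lemma upsG_swap (K : TE n → Fin n → Fin n → ℝ) (q : TE n) (u w : TE n) :
    UpsG g K q ![u, w] = -UpsG g K q ![w, u] := by
  unfold UpsG
  rw [← Finset.sum_neg_distrib]
  refine Finset.sum_congr rfl fun a _ => ?_
  rw [← Finset.sum_neg_distrib]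
  refine Finset.sum_congr rfl fun b _ => ?_
  simp only [Matrix.cons_val_zero, Matrix.cons_val_one, Matrix.head_cons]
  ring

lemma uc_ll (q : TE n) (c d : Fin n) :
    Uc g G q (.inl c) (.inl d)
      = ∑ s, (g q.1 s c * linK G q d s - g q.1 s d * linK G q c s) := by
  unfold Uc UpsG bas
  simp only [Matrix.cons_val_zero, Matrix.cons_val_one, Matrix.head_cons]
  simp [Pi.single_apply, mul_ite, Finset.sum_ite_eq, Finset.sum_ite_eq',
    Finset.sum_sub_distrib]
  simp only [mul_sub, mul_ite, mul_zero, mul_neg, Finset.sum_sub_distrib,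
    Finset.sum_ite_eq, Finset.sum_ite_eq', Finset.mem_univ, if_true, Finset.sum_neg_distrib]
  ring

lemma uc_lr (q : TE n) (c d : Fin n) :
    Uc g G q (.inl c) (.inr d) = -g q.1 d c := by
  unfold Uc UpsG bas
  simp [Pi.single_apply, mul_ite, Finset.sum_ite_eq, Finset.sum_ite_eq',
    Finset.sum_sub_distrib]

lemma uc_rl (q : TE n) (c d : Fin n) :
    Uc g G q (.inr c) (.inl d) = g q.1 c d := by
  unfold Uc UpsG bas
  simp [Pi.single_apply, mul_ite, Finset.sum_ite_eq, Finset.sum_ite_eq',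
    Finset.sum_sub_distrib]

lemma uc_rr (q : TE n) (c d : Fin n) :
    Uc g G q (.inr c) (.inr d) = 0 := by
  unfold Uc UpsG bas
  simp [Pi.single_apply, mul_ite, Finset.sum_ite_eq, Finset.sum_ite_eq',
    Finset.sum_sub_distrib]

lemma smUc (hg : ∀ a b, ContDiff ℝ (⊤ : ℕ∞) (fun x => g x a b))
    (hG : ∀ a b d, ContDiff ℝ (⊤ : ℕ∞) (fun x => G x a b d)) (B C : Idx n) :
    ContDiff ℝ (⊤ : ℕ∞) (fun q => Uc g G q B C) := by
  cases B with
  | inl c => cases C with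
    | inl d =>
        have : (fun q => Uc g G q (.inl c) (.inl d))
            = fun q => ∑ s, (g q.1 s c * linK G q d s - g q.1 s d * linK G q c s) :=
          funext fun q => uc_ll q c d
        rw [this]
        exact ContDiff.sum fun s _ =>
          ((smBase (hg s c)).mul (smLinK G hG d s)).sub ((smBase (hg s d)).mul (smLinK G hG c s))
    | inr d =>
        have : (fun q => Uc g G q (.inl c) (.inr d)) = fun q => -g q.1 d c :=
          funext fun q => uc_lr q c d
        rw [this]; exact (smBase (hg d c)).neg
  | inr c => cases C with
    | inl d =>
        have : (fun q => Uc g G q (.inr c) (.inl d)) = fun q => g q.1 c d :=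
          funext fun q => uc_rl q c d
        rw [this]; exact smBase (hg c d)
    | inr d =>
        have : (fun q => Uc g G q (.inr c) (.inr d)) = fun _ => (0:ℝ) :=
          funext fun q => uc_rr q c d
        rw [this]; exact contDiff_const

lemma lam_ll (q : TE n) (c d : Fin n) :
    Lam ginv (linK G) q (.inl c) (.inl d) = 0 := by
  unfold Lam Xcomp Ycomp
  simp

lemma lam_lr (q : TE n) (c d : Fin n) :
    Lam ginv (linK G) q (.inl c) (.inr d) = ginv q.1 c d := by
  unfold Lam Xcomp Ycomp
  simp [ite_mul, mul_ite, Finset.sum_ite_eq, Finset.sum_ite_eq']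

lemma lam_rl (q : TE n) (c d : Fin n) :
    Lam ginv (linK G) q (.inr c) (.inl d) = -ginv q.1 d c := by
  unfold Lam Xcomp Ycomp
  simp [ite_mul, mul_ite, Finset.sum_ite_eq, Finset.sum_ite_eq']

lemma lam_rr (q : TE n) (c d : Fin n) :
    Lam ginv (linK G) q (.inr c) (.inr d)
      = ∑ s, (ginv q.1 s d * linK G q s c - ginv q.1 s c * linK G q s d) := by
  unfold Lam Xcomp Ycomp
  simp only [mul_ite, mul_one, mul_zero, ite_mul, zero_mul, one_mul,
    Finset.sum_ite_eq, Finset.sum_ite_eq', Finset.mem_univ, if_true,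
    mul_sub, Finset.sum_sub_distrib]

lemma lam_antisym (q : TE n) (A B : Idx n) :
    Lam ginv (linK G) q A B = -Lam ginv (linK G) q B A := by
  unfold Lam
  rw [← Finset.sum_neg_distrib]
  refine Finset.sum_congr rfl fun a _ => ?_
  rw [← Finset.sum_neg_distrib]
  exact Finset.sum_congr rfl fun b _ => by ring

lemma smLam (hginv : ∀ a b, ContDiff ℝ (⊤ : ℕ∞) (fun x => ginv x a b))
    (hG : ∀ a b d, ContDiff ℝ (⊤ : ℕ∞) (fun x => G x a b d)) (A B : Idx n) :
    ContDiff ℝ (⊤ : ℕ∞) (fun q => Lam ginv (linK G) q A B) := by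
  cases A with
  | inl c => cases B with
    | inl d =>
        rw [funext fun q => lam_ll (ginv := ginv) (G := G) q c d]; exact contDiff_const
    | inr d =>
        rw [funext fun q => lam_lr (ginv := ginv) (G := G) q c d]; exact smBase (hginv c d)
  | inr c => cases B with
    | inl d =>
        rw [funext fun q => lam_rl (ginv := ginv) (G := G) q c d]
        exact (smBase (hginv d c)).neg
    | inr d =>
        rw [funext fun q => lam_rr (ginv := ginv) (G := G) q c d]
        exact ContDiff.sum fun s _ =>
          ((smBase (hginv s d)).mul (smLinK G hG s c)).sub
            ((smBase (hginv s c)).mul (smLinK G hG s d))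

/-! ### `DT`-level derivative rules -/

lemma DT_const (A : Idx n) (c : ℝ) (p : TE n) : DT A (fun _ => c) p = 0 := by
  rw [DT_eq_fderiv]; exact fderiv_const_apply c p _

lemma DT_sum {ι : Type*} (s : Finset ι) {A : ι → TE n → ℝ} {p : TE n} (D : Idx n)
    (hA : ∀ i ∈ s, DifferentiableAt ℝ (A i) p) :
    DT D (fun q => ∑ i ∈ s, A i q) p = ∑ i ∈ s, DT D (A i) p := by
  rw [DT_eq_fderiv, fderiv_sum_apply' s hA]
  exact Finset.sum_congr rfl fun i _ => (DT_eq_fderiv D (A i) p).symm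

lemma DT_mul {F F' : TE n → ℝ} {p : TE n} (D : Idx n) (hF : DifferentiableAt ℝ F p)
    (hF' : DifferentiableAt ℝ F' p) :
    DT D (fun q => F q * F' q) p = F p * DT D F' p + F' p * DT D F p := by
  rw [DT_eq_fderiv, fderiv_mul_apply hF hF', DT_eq_fderiv, DT_eq_fderiv]

lemma pdT_base {h : Base n → ℝ} (hh : ContDiff ℝ (⊤ : ℕ∞) h) (a : Fin n) (p : TE n) :
    pdT (fun q : TE n => h q.1) a p = pdB h a p.1 := by
  unfold pdT pdB
  rw [fderiv_base (hh.differentiable (by simp)).differentiableAt]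

lemma vdT_base {h : Base n → ℝ} (hh : ContDiff ℝ (⊤ : ℕ∞) h) (a : Fin n) (p : TE n) :
    vdT (fun q : TE n => h q.1) a p = 0 := by
  unfold vdT
  rw [fderiv_base (hh.differentiable (by simp)).differentiableAt]
  exact map_zero _

lemma vdT_snda (a e : Fin n) (p : TE n) :
    vdT (fun q : TE n => q.2 a) e p = if a = e then 1 else 0 := by
  unfold vdT
  rw [fderiv_snda]
  simp [Pi.single_apply]

lemma vdT_linK (hG : ∀ a b d, ContDiff ℝ (⊤ : ℕ∞) (fun x => G x a b d)) (a b e : Fin n)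
    (p : TE n) : vdT (fun q => linK G q a b) e p = G p.1 a b e := by
  unfold linK
  have : vdT (fun q : TE n => ∑ c, G q.1 a b c * q.2 c) e p
      = ∑ c, vdT (fun q : TE n => G q.1 a b c * q.2 c) e p :=
    DT_sum (D := .inr e) _ fun c _ =>
      ((smBase (hG a b c)).differentiable (by simp)).differentiableAt.fun_mul
        ((smSnda c).differentiable (by simp)).differentiableAt
  rw [this]
  have : ∀ c, vdT (fun q : TE n => G q.1 a b c * q.2 c) e p
      = G p.1 a b c * (if c = e then 1 else 0) := by
    intro c
    rw [show vdT (fun q : TE n => G q.1 a b c * q.2 c) e p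
        = DT (.inr e) (fun q : TE n => G q.1 a b c * q.2 c) p from rfl,
      DT_mul (.inr e) ((smBase (hG a b c)).differentiable (by simp)).differentiableAt
        ((smSnda c).differentiable (by simp)).differentiableAt]
    have h1 : DT (.inr e) (fun q : TE n => q.2 c) p = if c = e then 1 else 0 :=
      vdT_snda c e p
    have h2 : DT (.inr e) (fun q : TE n => G q.1 a b c) p = 0 := vdT_base (hG a b c) e p
    rw [h1, h2]; ring
  rw [Finset.sum_congr rfl fun c _ => this c]
  simp [Finset.sum_ite_eq']

end
end Stmt13Aux

namespace Stmt13Aux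
section
variable {n : ℕ} {g ginv : Base n → Fin n → Fin n → ℝ}
  {G : Base n → Fin n → Fin n → Fin n → ℝ}

lemma dAt {E F : Type*} [NormedAddCommGroup E] [NormedSpace ℝ E]
    [NormedAddCommGroup F] [NormedSpace ℝ F]
    {f : E → F} (h : ContDiff ℝ (⊤ : ℕ∞) f) (p : E) : DifferentiableAt ℝ f p :=
  (h.differentiable (by simp)).differentiableAt

lemma sum_swap12 {M : Type*} [AddCommMonoid M] {α β : Type*} [Fintype α] [Fintype β]
    (f : α → β → M) : ∑ a, ∑ b, f a b = ∑ b, ∑ a, f a b := Finset.sum_comm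

lemma sum_swap23 {M : Type*} [AddCommMonoid M] {α β γ : Type*} [Fintype α] [Fintype β]
    [Fintype γ] (f : α → β → γ → M) :
    ∑ a, ∑ b, ∑ c, f a b c = ∑ a, ∑ c, ∑ b, f a b c :=
  Finset.sum_congr rfl fun a _ => Finset.sum_comm

lemma sum_swap34 {M : Type*} [AddCommMonoid M] {α β γ δ : Type*} [Fintype α] [Fintype β]
    [Fintype γ] [Fintype δ] (f : α → β → γ → δ → M) :
    ∑ a, ∑ b, ∑ c, ∑ d, f a b c d = ∑ a, ∑ b, ∑ d, ∑ c, f a b c d :=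
  Finset.sum_congr rfl fun a _ => Finset.sum_congr rfl fun b _ => Finset.sum_comm

lemma sum_comm3 {M : Type*} [AddCommMonoid M] {α β γ : Type*} [Fintype α] [Fintype β]
    [Fintype γ] (f : α → β → γ → M) :
    ∑ a, ∑ b, ∑ c, f a b c = ∑ c, ∑ b, ∑ a, f a b c := by
  rw [sum_swap23, sum_swap12]
  exact Finset.sum_congr rfl fun c _ => Finset.sum_comm

lemma fderiv_Fu (hg : ∀ a b, ContDiff ℝ (⊤ : ℕ∞) (fun x => g x a b)) (u p z : TE n) :
    fderiv ℝ (fun q => gflat g q (fun _ => u)) p z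
      = ∑ a, ∑ b, (fderiv ℝ (fun y => g y a b) p.1 z.1 * p.2 a
          + g p.1 a b * z.2 a) * u.1 b := by
  have hsm : ∀ (a b : Fin n), ContDiff ℝ (⊤ : ℕ∞) (fun q : TE n => g q.1 a b * q.2 a * u.1 b) :=
    fun a b => ((smBase (hg a b)).mul (smSnda a)).mul contDiff_const
  have e : (fun q => gflat g q (fun _ => u))
      = fun q : TE n => ∑ a, ∑ b, g q.1 a b * q.2 a * u.1 b := rfl
  rw [e, fderiv_sum_apply' _ (fun a _ => DifferentiableAt.fun_sum fun b _ => dAt (hsm a b) p) z]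
  refine Finset.sum_congr rfl fun a _ => ?_
  rw [fderiv_sum_apply' _ (fun b _ => dAt (hsm a b) p) z]
  refine Finset.sum_congr rfl fun b _ => ?_
  have h2 : fderiv ℝ (fun q : TE n => (g q.1 a b * q.2 a) * u.1 b) p z
      = (g p.1 a b * p.2 a) * fderiv ℝ (fun _ : TE n => u.1 b) p z
        + u.1 b * fderiv ℝ (fun q : TE n => g q.1 a b * q.2 a) p z :=
    fderiv_mul_apply (dAt ((smBase (hg a b)).mul (smSnda a)) p)
      (dAt contDiff_const p) z
  rw [h2, fderiv_const_apply,
    fderiv_mul_apply (dAt (smBase (hg a b)) p) (dAt (smSnda a) p) z,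
    fderiv_snda, fderiv_base (dAt (hg a b) p.1)]
  ring

lemma extd_gflat (hg : ∀ a b, ContDiff ℝ (⊤ : ℕ∞) (fun x => g x a b)) (p : TE n)
    (v : Fin 2 → TE n) :
    extd (gflat g) p v
      = (∑ a, ∑ b, (fderiv ℝ (fun y => g y a b) p.1 (v 0).1 * p.2 a
            + g p.1 a b * (v 0).2 a) * (v 1).1 b)
        - ∑ a, ∑ b, (fderiv ℝ (fun y => g y a b) p.1 (v 1).1 * p.2 a
            + g p.1 a b * (v 1).2 a) * (v 0).1 b := by
  unfold extd
  rw [Fin.sum_univ_two]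
  have e0 : (fun q => gflat g q (v ∘ (0:Fin 2).succAbove))
      = fun q => gflat g q (fun _ => v 1) := by
    funext q; unfold gflat
    have : (v ∘ (0:Fin 2).succAbove) 0 = v 1 := by
      simp only [Function.comp_apply]; congr 1 <;> decide
    rw [this]
  have e1 : (fun q => gflat g q (v ∘ (1:Fin 2).succAbove))
      = fun q => gflat g q (fun _ => v 0) := by
    funext q; unfold gflat
    have : (v ∘ (1:Fin 2).succAbove) 0 = v 0 := by
      simp only [Function.comp_apply]; congr 1 <;> decide
    rw [this]
  rw [e0, e1, fderiv_Fu hg (v 1) p (v 0), fderiv_Fu hg (v 0) p (v 1)]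
  norm_num
  ring

lemma insK_gflat (K : TE n → Fin n → Fin n → ℝ) (p : TE n) (v : Fin 1 → TE n) :
    insK (horK K) (gflat g) p v = gflat g p v := by
  show ∑ j : Fin 1, (-1:ℝ) ^ (j:ℕ) * gflat g p
      (Fin.cons (horK K p (v j)) (v ∘ j.succAbove)) = _
  rw [Fin.sum_univ_one]
  unfold gflat horK
  norm_num

lemma lieK_gflat_N (hg : ∀ a b, ContDiff ℝ (⊤ : ℕ∞) (fun x => g x a b)) (p : TE n)
    (v : Fin 2 → TE n) :
    lieK (horK (linK G)) (gflat g) p v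
      = (∑ a, ∑ b, (fderiv ℝ (fun y => g y a b) p.1 (v 0).1 * p.2 a
            + g p.1 a b * (∑ e, (v 0).1 e * linK G p e a)) * (v 1).1 b)
        - ∑ a, ∑ b, (fderiv ℝ (fun y => g y a b) p.1 (v 1).1 * p.2 a
            + g p.1 a b * (∑ e, (v 1).1 e * linK G p e a)) * (v 0).1 b := by
  have hins : insK (horK (linK G)) (gflat g) = gflat g :=
    funext fun p => funext fun v => insK_gflat _ p v
  show insK (horK (linK G)) (extd (gflat g)) p v - extd (insK (horK (linK G)) (gflat g)) p v = _
  rw [hins]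
  have hK : ∀ u : TE n, horK (linK G) p u
      = (u.1, fun b => ∑ a, u.1 a * linK G p a b) := fun u => rfl
  have hinsd : insK (horK (linK G)) (extd (gflat g)) p v
      = extd (gflat g) p (Fin.cons (horK (linK G) p (v 0)) (v ∘ (0:Fin 2).succAbove))
        - extd (gflat g) p (Fin.cons (horK (linK G) p (v 1)) (v ∘ (1:Fin 2).succAbove)) := by
    show ∑ j : Fin 2, (-1:ℝ)^(j:ℕ) * extd (gflat g) p
        (Fin.cons (horK (linK G) p (v j)) (v ∘ j.succAbove)) = _
    rw [Fin.sum_univ_two]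
    norm_num
    ring
  rw [hinsd, extd_gflat hg p v, extd_gflat hg p _, extd_gflat hg p _]
  have c00 : (Fin.cons (horK (linK G) p (v 0)) (v ∘ (0:Fin 2).succAbove) : Fin 2 → TE n) 0
      = horK (linK G) p (v 0) := rfl
  have c01 : (Fin.cons (horK (linK G) p (v 0)) (v ∘ (0:Fin 2).succAbove) : Fin 2 → TE n) 1
      = v 1 := by
    show (v ∘ (0:Fin 2).succAbove) 0 = v 1
    simp only [Function.comp_apply]; congr 1 <;> decide
  have c10 : (Fin.cons (horK (linK G) p (v 1)) (v ∘ (1:Fin 2).succAbove) : Fin 2 → TE n) 0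
      = horK (linK G) p (v 1) := rfl
  have c11 : (Fin.cons (horK (linK G) p (v 1)) (v ∘ (1:Fin 2).succAbove) : Fin 2 → TE n) 1
      = v 0 := by
    show (v ∘ (1:Fin 2).succAbove) 0 = v 0
    simp only [Function.comp_apply]; congr 1 <;> decide
  rw [c00, c01, c10, c11, hK, hK]
  simp only
  simp only [← Finset.sum_sub_distrib]
  refine Finset.sum_congr rfl fun a _ => Finset.sum_congr rfl fun b _ => ?_
  ring

end
end Stmt13Aux

namespace Stmt13Aux
section
variable {n : ℕ} {g ginv : Base n → Fin n → Fin n → ℝ}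
  {G : Base n → Fin n → Fin n → Fin n → ℝ}

lemma sum_comm4_14 {M : Type*} [AddCommMonoid M] {α β γ δ : Type*} [Fintype α] [Fintype β]
    [Fintype γ] [Fintype δ] (f : α → β → γ → δ → M) :
    ∑ a, ∑ b, ∑ c, ∑ d, f a b c d = ∑ d, ∑ b, ∑ c, ∑ a, f a b c d := by
  calc ∑ a, ∑ b, ∑ c, ∑ d, f a b c d
      = ∑ a, ∑ b, ∑ d, ∑ c, f a b c d := sum_swap34 f
    _ = ∑ a, ∑ d, ∑ b, ∑ c, f a b c d := sum_swap23 (fun a b d => ∑ c, f a b c d)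
    _ = ∑ d, ∑ a, ∑ b, ∑ c, f a b c d := sum_swap12 _
    _ = ∑ d, ∑ b, ∑ a, ∑ c, f a b c d :=
        Finset.sum_congr rfl fun d _ => sum_swap12 _
    _ = ∑ d, ∑ b, ∑ c, ∑ a, f a b c d :=
        Finset.sum_congr rfl fun d _ => sum_swap23 _

lemma reorg (pd : Fin n → Fin n → Fin n → ℝ) (gm : Fin n → Fin n → ℝ)
    (Gm : Fin n → Fin n → Fin n → ℝ) (x2 h w : Fin n → ℝ) :
    ∑ a, ∑ b, ((∑ c, h c * pd a b c) * x2 a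
        + gm a b * (∑ e, h e * (∑ c, Gm e a c * x2 c))) * w b
      = ∑ c, ∑ b, (∑ e, x2 e * (pd e b c + ∑ s, gm s b * Gm c s e)) * (h c * w b) := by
  have lhs_eq : ∑ a, ∑ b, ((∑ c, h c * pd a b c) * x2 a
        + gm a b * (∑ e, h e * (∑ c, Gm e a c * x2 c))) * w b
      = (∑ a, ∑ b, ∑ c, h c * pd a b c * x2 a * w b)
        + ∑ a, ∑ b, ∑ e, ∑ c, gm a b * h e * Gm e a c * x2 c * w b := by
    simp only [Finset.mul_sum, Finset.sum_mul, add_mul, Finset.sum_add_distrib]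
    congr 1
    exact Finset.sum_congr rfl fun a _ => Finset.sum_congr rfl fun b _ =>
      Finset.sum_congr rfl fun e _ => Finset.sum_congr rfl fun c _ => by ring
  have rhs_eq : ∑ c, ∑ b, (∑ e, x2 e * (pd e b c + ∑ s, gm s b * Gm c s e)) * (h c * w b)
      = (∑ c, ∑ b, ∑ e, x2 e * pd e b c * h c * w b)
        + ∑ c, ∑ b, ∑ e, ∑ s, x2 e * gm s b * Gm c s e * h c * w b := by
    simp only [Finset.mul_sum, Finset.sum_mul, mul_add, add_mul, Finset.sum_add_distrib]
    congr 1
    · exact Finset.sum_congr rfl fun c _ => Finset.sum_congr rfl fun b _ =>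
        Finset.sum_congr rfl fun e _ => by ring
    · exact Finset.sum_congr rfl fun c _ => Finset.sum_congr rfl fun b _ =>
        Finset.sum_congr rfl fun e _ => Finset.sum_congr rfl fun s _ => by ring
  rw [lhs_eq, rhs_eq]
  congr 1
  · rw [sum_comm3 (fun a b c => h c * pd a b c * x2 a * w b)]
    exact Finset.sum_congr rfl fun c _ => Finset.sum_congr rfl fun b _ =>
      Finset.sum_congr rfl fun a _ => by ring
  · rw [sum_swap34 (fun a b e c => gm a b * h e * Gm e a c * x2 c * w b),
      sum_comm4_14 (fun a b c e => gm a b * h e * Gm e a c * x2 c * w b)]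
    refine Finset.sum_congr rfl fun c _ => Finset.sum_congr rfl fun b _ =>
      Finset.sum_congr rfl fun e _ => Finset.sum_congr rfl fun s _ => by ring

/-- The central coordinate formula for `L[K] g♭`. -/
lemma lieK_central (hg : ∀ a b, ContDiff ℝ (⊤ : ℕ∞) (fun x => g x a b)) (p : TE n)
    (v : Fin 2 → TE n) :
    lieK (horK (linK G)) (gflat g) p v
      = ∑ c, ∑ b, (∑ e, p.2 e * (pdB (fun y => g y e b) c p.1
          + ∑ s, g p.1 s b * G p.1 c s e))
          * ((v 0).1 c * (v 1).1 b - (v 1).1 c * (v 0).1 b) := by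
  rw [lieK_gflat_N hg p v]
  have hfd : ∀ (u : TE n) (a b : Fin n), fderiv ℝ (fun y => g y a b) p.1 u.1
      = ∑ c, u.1 c * pdB (fun y => g y a b) c p.1 :=
    fun u a b => fderiv_expandB (dAt (hg a b) p.1) u.1
  have hlin : ∀ (e a : Fin n), linK G p e a = ∑ c, G p.1 e a c * p.2 c := fun e a => rfl
  simp only [hfd, hlin]
  rw [reorg (fun a b c => pdB (fun y => g y a b) c p.1) (fun a b => g p.1 a b)
      (fun e a c => G p.1 e a c) p.2 (v 0).1 (v 1).1,
    reorg (fun a b c => pdB (fun y => g y a b) c p.1) (fun a b => g p.1 a b)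
      (fun e a c => G p.1 e a c) p.2 (v 1).1 (v 0).1]
  simp only [mul_sub, Finset.sum_sub_distrib]

lemma sym_cancel (T : Fin n → Fin n → ℝ) (hT : ∀ c b, T c b = T b c) (u w : Fin n → ℝ) :
    ∑ c, ∑ b, T c b * (u c * w b - w c * u b) = 0 := by
  have h : ∑ c, ∑ b, T c b * (u c * w b) = ∑ c, ∑ b, T c b * (w c * u b) := by
    rw [sum_swap12]
    exact Finset.sum_congr rfl fun b _ => Finset.sum_congr rfl fun c _ => by
      rw [hT]; ring
  simp only [mul_sub, Finset.sum_sub_distrib, h, sub_self]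

/-- Part 1 of the theorem. -/
lemma part1 (hg : ∀ a b, ContDiff ℝ (⊤ : ℕ∞) (fun x => g x a b)) :
    (∀ p (v : Fin 2 → TE n), lieK (horK (linK G)) (gflat g) p v = 0)
      ↔ (∀ x e a b, pdB (fun y => g y e b) a x + ∑ s, g x s b * G x a s e
          = pdB (fun y => g y e a) b x + ∑ s, g x s a * G x b s e) := by
  constructor
  · intro h x e a b
    have h0 := h (x, Pi.single e 1) ![((Pi.single a 1 : Fin n → ℝ), 0), (Pi.single b 1, 0)]
    rw [lieK_central hg] at h0
    simp only [Matrix.cons_val_zero, Matrix.cons_val_one, Matrix.head_cons,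
      Pi.single_apply, mul_ite, mul_one, mul_zero, ite_mul, zero_mul, one_mul,
      Finset.sum_ite_eq, Finset.sum_ite_eq', Finset.mem_univ, if_true,
      mul_sub, sub_mul, Finset.sum_sub_distrib] at h0
    rw [sub_eq_zero] at h0
    linarith [h0]
  · intro hC p v
    rw [lieK_central hg]
    exact sym_cancel _ (fun c b => Finset.sum_congr rfl fun e _ => by rw [hC p.1 e c b]) _ _

end
end Stmt13Aux

namespace Stmt13Aux
section
variable {n : ℕ} {g ginv : Base n → Fin n → Fin n → ℝ}
  {G : Base n → Fin n → Fin n → Fin n → ℝ}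

lemma DT_sub {F F' : TE n → ℝ} {p : TE n} (D : Idx n) (hF : DifferentiableAt ℝ F p)
    (hF' : DifferentiableAt ℝ F' p) :
    DT D (fun q => F q - F' q) p = DT D F p - DT D F' p := by
  rw [DT_eq_fderiv, fderiv_sub_apply' hF hF', DT_eq_fderiv, DT_eq_fderiv]

lemma extd_gflat_F (q : TE n) (w : Fin 2 → TE n) :
    extd (gflat g) q w
      = fderiv ℝ (fun q' => gflat g q' (fun _ => w 1)) q (w 0)
        - fderiv ℝ (fun q' => gflat g q' (fun _ => w 0)) q (w 1) := by
  show ∑ i : Fin 2, (-1:ℝ)^(i:ℕ) * fderiv ℝ (fun q' => gflat g q' (w ∘ i.succAbove)) q (w i) = _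
  rw [Fin.sum_univ_two]
  have e0 : (fun q' => gflat g q' (w ∘ (0:Fin 2).succAbove))
      = fun q' => gflat g q' (fun _ => w 1) := by
    funext q'; unfold gflat
    have : (w ∘ (0:Fin 2).succAbove) 0 = w 1 := by
      simp only [Function.comp_apply]; congr 1 <;> decide
    rw [this]
  have e1 : (fun q' => gflat g q' (w ∘ (1:Fin 2).succAbove))
      = fun q' => gflat g q' (fun _ => w 0) := by
    funext q'; unfold gflat
    have : (w ∘ (1:Fin 2).succAbove) 0 = w 0 := by
      simp only [Function.comp_apply]; congr 1 <;> decide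
    rw [this]
  rw [e0, e1]
  norm_num
  ring

/-- `d ∘ d = 0` on `g♭`, by symmetry of second derivatives. -/
lemma extd_extd_gflat (hg : ∀ a b, ContDiff ℝ (⊤ : ℕ∞) (fun x => g x a b)) (p : TE n)
    (v : Fin 3 → TE n) : extd (extd (gflat g)) p v = 0 := by
  set F : TE n → TE n → ℝ := fun u q => gflat g q (fun _ => u) with hF
  have hsm : ∀ u, ContDiff ℝ (⊤ : ℕ∞) (F u) := fun u => smFu g hg u
  have hd1 : ∀ u, ContDiff ℝ 1 (fderiv ℝ (F u)) := fun u =>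
    (hsm u).fderiv_right ((WithTop.coe_le_coe.mpr le_top))
  have hdiff : ∀ (u w : TE n) (q : TE n),
      DifferentiableAt ℝ (fun q' => fderiv ℝ (F u) q' w) q := by
    intro u w q
    exact ((ContinuousLinearMap.apply ℝ ℝ w).differentiable.comp
      ((hd1 u).differentiable one_ne_zero)).differentiableAt
  have hlink : ∀ (u w z : TE n),
      fderiv ℝ (fun q' => fderiv ℝ (F u) q' w) p z
        = fderiv ℝ (fderiv ℝ (F u)) p z w := by
    intro u w z
    have h := fderiv_clm_apply (x := p)
      (((hd1 u).differentiable one_ne_zero).differentiableAt)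
      (differentiableAt_const (c := w))
    rw [show (fun q' => fderiv ℝ (F u) q' w)
        = fun q' => (fderiv ℝ (F u) q') ((fun _ => w) q') from rfl, h]
    simp
  have hsym : ∀ (u w z : TE n),
      fderiv ℝ (fun q' => fderiv ℝ (F u) q' w) p z
        = fderiv ℝ (fun q' => fderiv ℝ (F u) q' z) p w := by
    intro u w z
    rw [hlink, hlink]
    exact second_derivative_symmetric
      (fun y => (dAt (hsm u) y).hasFDerivAt)
      ((((hd1 u).differentiable one_ne_zero) p).hasFDerivAt) z w
  show ∑ i : Fin 3, (-1:ℝ)^(i:ℕ)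
      * fderiv ℝ (fun q => extd (gflat g) q (v ∘ i.succAbove)) p (v i) = 0
  rw [Fin.sum_univ_three]
  have sa0 : ∀ j : Fin 2, (v ∘ (0:Fin 3).succAbove) j = ![v 1, v 2] j := by
    intro j; fin_cases j <;> (simp only [Function.comp_apply]; congr 1 <;> decide)
  have sa1 : ∀ j : Fin 2, (v ∘ (1:Fin 3).succAbove) j = ![v 0, v 2] j := by
    intro j; fin_cases j <;> (simp only [Function.comp_apply]; congr 1 <;> decide)
  have sa2 : ∀ j : Fin 2, (v ∘ (2:Fin 3).succAbove) j = ![v 0, v 1] j := by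
    intro j; fin_cases j <;> (simp only [Function.comp_apply]; congr 1 <;> decide)
  have e0 : (fun q => extd (gflat g) q (v ∘ (0:Fin 3).succAbove))
      = fun q => fderiv ℝ (F (v 2)) q (v 1) - fderiv ℝ (F (v 1)) q (v 2) := by
    funext q
    rw [show (v ∘ (0:Fin 3).succAbove) = ![v 1, v 2] from funext sa0, extd_gflat_F]
    rfl
  have e1 : (fun q => extd (gflat g) q (v ∘ (1:Fin 3).succAbove))
      = fun q => fderiv ℝ (F (v 2)) q (v 0) - fderiv ℝ (F (v 0)) q (v 2) := by
    funext q
    rw [show (v ∘ (1:Fin 3).succAbove) = ![v 0, v 2] from funext sa1, extd_gflat_F]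
    rfl
  have e2 : (fun q => extd (gflat g) q (v ∘ (2:Fin 3).succAbove))
      = fun q => fderiv ℝ (F (v 1)) q (v 0) - fderiv ℝ (F (v 0)) q (v 1) := by
    funext q
    rw [show (v ∘ (2:Fin 3).succAbove) = ![v 0, v 1] from funext sa2, extd_gflat_F]
    rfl
  rw [e0, e1, e2,
    fderiv_sub_apply' (hdiff _ _ _) (hdiff _ _ _),
    fderiv_sub_apply' (hdiff _ _ _) (hdiff _ _ _),
    fderiv_sub_apply' (hdiff _ _ _) (hdiff _ _ _)]
  rw [hsym (v 2) (v 1) (v 0), hsym (v 1) (v 2) (v 0), hsym (v 0) (v 2) (v 1)]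
  norm_num
  try ring

/-- `Υ = d g♭ − L[K] g♭` (pointwise). -/
lemma ups_eq_extd_sub_lieK (hg : ∀ a b, ContDiff ℝ (⊤ : ℕ∞) (fun x => g x a b)) (p : TE n)
    (v : Fin 2 → TE n) :
    extd (gflat g) p v - UpsG g (linK G) p v = lieK (horK (linK G)) (gflat g) p v := by
  rw [lieK_gflat_N hg, extd_gflat hg]
  unfold UpsG
  have hc : ∀ (u : TE n) (a : Fin n),
      ∑ c, linK G p c a * u.1 c = ∑ e, u.1 e * linK G p e a :=
    fun u a => Finset.sum_congr rfl fun c _ => mul_comm _ _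
  simp only [hc]
  simp only [← Finset.sum_sub_distrib]
  refine Finset.sum_congr rfl fun a _ => Finset.sum_congr rfl fun b _ => by ring

/-- Part 2, direction (2) → (3). -/
lemma part2a (hg : ∀ a b, ContDiff ℝ (⊤ : ℕ∞) (fun x => g x a b))
    (hC : ∀ x e a b, pdB (fun y => g y e b) a x + ∑ s, g x s b * G x a s e
        = pdB (fun y => g y e a) b x + ∑ s, g x s a * G x b s e) :
    ∀ p (v : Fin 3 → TE n), extd (UpsG g (linK G)) p v = 0 := by
  have hlie : ∀ p (v : Fin 2 → TE n), lieK (horK (linK G)) (gflat g) p v = 0 :=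
    (part1 hg).2 hC
  have hU : UpsG g (linK G) = extd (gflat g) := by
    funext p v
    have h1 := ups_eq_extd_sub_lieK (G := G) hg p v
    rw [hlie p v] at h1
    linarith
  intro p v
  rw [hU]
  exact extd_extd_gflat hg p v

/-- Part 2, direction (3) → (2). -/
lemma part2b (hg : ∀ a b, ContDiff ℝ (⊤ : ℕ∞) (fun x => g x a b))
    (hG : ∀ a b d, ContDiff ℝ (⊤ : ℕ∞) (fun x => G x a b d))
    (h : ∀ p (v : Fin 3 → TE n), extd (UpsG g (linK G)) p v = 0) :
    ∀ x e a b, pdB (fun y => g y e b) a x + ∑ s, g x s b * G x a s e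
        = pdB (fun y => g y e a) b x + ∑ s, g x s a * G x b s e := by
  intro x e a b
  have h0 := h (x, fun _ => 0) ![bas (.inr e), bas (.inl a), bas (.inl b)]
  set p : TE n := (x, fun _ => 0) with hp
  set v : Fin 3 → TE n := ![bas (.inr e), bas (.inl a), bas (.inl b)] with hv
  have hshow : extd (UpsG g (linK G)) p v
      = ∑ i : Fin 3, (-1:ℝ)^(i:ℕ)
          * fderiv ℝ (fun q => UpsG g (linK G) q (v ∘ i.succAbove)) p (v i) := rfl
  rw [hshow, Fin.sum_univ_three] at h0
  have sa0 : (v ∘ (0:Fin 3).succAbove) = ![bas (.inl a), bas (.inl b)] := by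
    funext j; fin_cases j <;> (simp only [Function.comp_apply]; rfl)
  have sa1 : (v ∘ (1:Fin 3).succAbove) = ![bas (.inr e), bas (.inl b)] := by
    funext j; fin_cases j <;> (simp only [Function.comp_apply]; rfl)
  have sa2 : (v ∘ (2:Fin 3).succAbove) = ![bas (.inr e), bas (.inl a)] := by
    funext j; fin_cases j <;> (simp only [Function.comp_apply]; rfl)
  have e0 : (fun q => UpsG g (linK G) q (v ∘ (0:Fin 3).succAbove))
      = fun q => ∑ s, (g q.1 s a * linK G q b s - g q.1 s b * linK G q a s) := by
    funext q; rw [sa0]; exact uc_ll q a b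
  have e1 : (fun q => UpsG g (linK G) q (v ∘ (1:Fin 3).succAbove))
      = fun q => g q.1 e b := by
    funext q; rw [sa1]; exact uc_rl q e b
  have e2 : (fun q => UpsG g (linK G) q (v ∘ (2:Fin 3).succAbove))
      = fun q => g q.1 e a := by
    funext q; rw [sa2]; exact uc_rl q e a
  rw [e0, e1, e2] at h0
  have hv0 : v 0 = bas (.inr e) := rfl
  have hv1 : v 1 = bas (.inl a) := rfl
  have hv2 : v 2 = bas (.inl b) := rfl
  rw [hv0, hv1, hv2] at h0
  have hsmm : ∀ s : Fin n, ContDiff ℝ (⊤ : ℕ∞)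
      (fun q : TE n => g q.1 s a * linK G q b s - g q.1 s b * linK G q a s) := fun s =>
    ((smBase (hg s a)).mul (smLinK G hG b s)).sub ((smBase (hg s b)).mul (smLinK G hG a s))
  have d0 : fderiv ℝ (fun q : TE n =>
        ∑ s, (g q.1 s a * linK G q b s - g q.1 s b * linK G q a s)) p (bas (.inr e))
      = ∑ s, (g p.1 s a * G p.1 b s e - g p.1 s b * G p.1 a s e) := by
    rw [← DT_eq_fderiv (.inr e), DT_sum _ (.inr e) (fun s _ => dAt (hsmm s) p)]
    refine Finset.sum_congr rfl fun s _ => ?_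
    rw [show DT (Sum.inr e) (fun q : TE n =>
        g q.1 s a * linK G q b s - g q.1 s b * linK G q a s) p
        = DT (Sum.inr e) (fun q : TE n => g q.1 s a * linK G q b s) p
          - DT (Sum.inr e) (fun q : TE n => g q.1 s b * linK G q a s) p from
      DT_sub _ (dAt ((smBase (hg s a)).mul (smLinK G hG b s)) p)
        (dAt ((smBase (hg s b)).mul (smLinK G hG a s)) p)]
    rw [DT_mul _ (dAt (smBase (hg s a)) p) (dAt (smLinK G hG b s) p),
      DT_mul _ (dAt (smBase (hg s b)) p) (dAt (smLinK G hG a s) p)]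
    have v1 : DT (Sum.inr e) (fun q : TE n => linK G q b s) p = G p.1 b s e :=
      vdT_linK hG b s e p
    have v2 : DT (Sum.inr e) (fun q : TE n => linK G q a s) p = G p.1 a s e :=
      vdT_linK hG a s e p
    have v3 : DT (Sum.inr e) (fun q : TE n => g q.1 s a) p = 0 := vdT_base (hg s a) e p
    have v4 : DT (Sum.inr e) (fun q : TE n => g q.1 s b) p = 0 := vdT_base (hg s b) e p
    rw [v1, v2, v3, v4]
    ring
  have d1 : fderiv ℝ (fun q : TE n => g q.1 e b) p (bas (.inl a))
      = pdB (fun y => g y e b) a p.1 := by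
    rw [← DT_eq_fderiv (.inl a)]
    exact pdT_base (hg e b) a p
  have d2 : fderiv ℝ (fun q : TE n => g q.1 e a) p (bas (.inl b))
      = pdB (fun y => g y e a) b p.1 := by
    rw [← DT_eq_fderiv (.inl b)]
    exact pdT_base (hg e a) b p
  rw [d0, d1, d2] at h0
  norm_num [Finset.sum_sub_distrib] at h0
  linarith
end
end Stmt13Aux

namespace Stmt13Aux
section
variable {n : ℕ} {g ginv : Base n → Fin n → Fin n → ℝ}
  {G : Base n → Fin n → Fin n → Fin n → ℝ}

lemma ginv_symm (hgsym : ∀ x a b, g x a b = g x b a)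
    (hinv' : ∀ x a b, ∑ c, g x a c * ginv x c b = if a = b then (1:ℝ) else 0)
    (x : Base n) (a b : Fin n) : ginv x b a = ginv x a b := by
  have h1 : ∑ c, ginv x c a * (∑ s, g x c s * ginv x s b) = ginv x b a := by
    simp only [hinv']
    simp [mul_ite, Finset.sum_ite_eq, Finset.sum_ite_eq']
  have h2 : ∑ c, ginv x c a * (∑ s, g x c s * ginv x s b) = ginv x a b := by
    simp only [Finset.mul_sum]
    rw [sum_swap12]
    have e : ∀ s, ∑ c, ginv x c a * (g x c s * ginv x s b)
        = (∑ c, g x s c * ginv x c a) * ginv x s b := by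
      intro s
      rw [Finset.sum_mul]
      exact Finset.sum_congr rfl fun c _ => by rw [hgsym x c s]; ring
    calc ∑ s, ∑ c, ginv x c a * (g x c s * ginv x s b)
        = ∑ s, (∑ c, g x s c * ginv x c a) * ginv x s b :=
          Finset.sum_congr rfl fun s _ => e s
      _ = ∑ s, (if s = a then (1:ℝ) else 0) * ginv x s b := by simp only [hinv']
      _ = ginv x a b := by simp [ite_mul, Finset.sum_ite_eq, Finset.sum_ite_eq']
  linarith

/-- `Λ · Υ = 1` in components. -/
lemma lamUc_inv (hgsym : ∀ x a b, g x a b = g x b a)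
    (hinv : ∀ x a b, ∑ c, ginv x a c * g x c b = if a = b then (1:ℝ) else 0)
    (hinv' : ∀ x a b, ∑ c, g x a c * ginv x c b = if a = b then (1:ℝ) else 0)
    (q : TE n) (A C : Idx n) :
    ∑ B : Idx n, Lam ginv (linK G) q A B * Uc g G q B C
      = if A = C then (1:ℝ) else 0 := by
  rw [Fintype.sum_sum_type]
  cases A with
  | inl a => cases C with
    | inl c =>
        simp only [lam_ll, lam_lr, uc_ll, uc_rl, zero_mul, Finset.sum_const_zero, zero_add]
        rw [hinv q.1 a c]
        simp [Sum.inl.injEq]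
    | inr c =>
        simp only [lam_ll, lam_lr, uc_lr, uc_rr, zero_mul, mul_zero,
          Finset.sum_const_zero]
        simp
  | inr a => cases C with
    | inl c =>
        simp only [lam_rl, lam_rr, uc_ll, uc_rl]
        have h1 : ∑ b, (-ginv q.1 b a)
              * (∑ s, (g q.1 s b * linK G q c s - g q.1 s c * linK G q b s))
            = -(linK G q c a)
              + ∑ b, ∑ s, ginv q.1 b a * (g q.1 s c * linK G q b s) := by
          have e : ∀ b, (-ginv q.1 b a)
                * (∑ s, (g q.1 s b * linK G q c s - g q.1 s c * linK G q b s))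
              = ∑ s, (-(ginv q.1 b a * (g q.1 s b * linK G q c s))
                  + ginv q.1 b a * (g q.1 s c * linK G q b s)) := by
            intro b; rw [Finset.mul_sum]
            exact Finset.sum_congr rfl fun s _ => by ring
          rw [Finset.sum_congr rfl fun b _ => e b]
          simp only [Finset.sum_add_distrib]
          congr 1
          rw [show (∑ b, ∑ s, -(ginv q.1 b a * (g q.1 s b * linK G q c s)))
              = -∑ b, ∑ s, ginv q.1 b a * (g q.1 s b * linK G q c s) from by
            simp [Finset.sum_neg_distrib]]
          rw [neg_inj, sum_swap12]
          have e2 : ∀ s, ∑ b, ginv q.1 b a * (g q.1 s b * linK G q c s)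
              = (∑ b, ginv q.1 a b * g q.1 b s) * linK G q c s := by
            intro s; rw [Finset.sum_mul]
            exact Finset.sum_congr rfl fun b _ => by
              rw [ginv_symm hgsym hinv' q.1 a b, hgsym q.1 s b]; ring
          rw [Finset.sum_congr rfl fun s _ => e2 s]
          simp only [hinv]
          simp [ite_mul, Finset.sum_ite_eq, Finset.sum_ite_eq']
        have h2 : ∑ b, (∑ s, (ginv q.1 s b * linK G q s a - ginv q.1 s a * linK G q s b))
              * g q.1 b c
            = linK G q c a - ∑ b, ∑ s, ginv q.1 s a * linK G q s b * g q.1 b c := by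
          have e : ∀ b, (∑ s, (ginv q.1 s b * linK G q s a - ginv q.1 s a * linK G q s b))
                * g q.1 b c
              = ∑ s, (ginv q.1 s b * g q.1 b c * linK G q s a
                  - ginv q.1 s a * linK G q s b * g q.1 b c) := by
            intro b; rw [Finset.sum_mul]
            exact Finset.sum_congr rfl fun s _ => by ring
          rw [Finset.sum_congr rfl fun b _ => e b]
          simp only [Finset.sum_sub_distrib]
          congr 1
          rw [sum_swap12]
          have e2 : ∀ s, ∑ b, ginv q.1 s b * g q.1 b c * linK G q s a
              = (∑ b, ginv q.1 s b * g q.1 b c) * linK G q s a := by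
            intro s; rw [Finset.sum_mul]
          rw [Finset.sum_congr rfl fun s _ => e2 s]
          simp only [hinv]
          simp [ite_mul, Finset.sum_ite_eq, Finset.sum_ite_eq']
        have h3 : ∑ b, ∑ s, ginv q.1 b a * (g q.1 s c * linK G q b s)
            = ∑ b, ∑ s, ginv q.1 s a * linK G q s b * g q.1 b c := by
          rw [sum_swap12]
          exact Finset.sum_congr rfl fun s _ => Finset.sum_congr rfl fun b _ => by ring
        rw [h1, h2]
        have : ¬((Sum.inr a : Idx n) = Sum.inl c) := by simp
        rw [if_neg this]
        linarith
    | inr c =>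
        simp only [lam_rl, lam_rr, uc_lr, uc_rr, mul_zero, Finset.sum_const_zero, add_zero]
        have e : ∀ b, (-ginv q.1 b a) * (-g q.1 c b) = g q.1 c b * ginv q.1 b a :=
          fun b => by ring
        rw [Finset.sum_congr rfl fun b _ => e b, hinv' q.1 c a]
        simp [Sum.inr.injEq, eq_comm]

/-- `Υ · Λ = 1` in components. -/
lemma ucLam_inv (hgsym : ∀ x a b, g x a b = g x b a)
    (hinv : ∀ x a b, ∑ c, ginv x a c * g x c b = if a = b then (1:ℝ) else 0)
    (hinv' : ∀ x a b, ∑ c, g x a c * ginv x c b = if a = b then (1:ℝ) else 0)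
    (q : TE n) (A C : Idx n) :
    ∑ B : Idx n, Uc g G q A B * Lam ginv (linK G) q B C
      = if A = C then (1:ℝ) else 0 := by
  have hM : (Matrix.of fun A B => Lam ginv (linK G) q A B)
      * (Matrix.of fun A B => Uc g G q A B) = 1 := by
    ext A' C'
    rw [Matrix.mul_apply]
    simp only [Matrix.of_apply]
    rw [lamUc_inv hgsym hinv hinv' q A' C']
    simp [Matrix.one_apply]
  have h2 := mul_eq_one_comm.mp hM
  have h3 := congrFun (congrFun h2 A) C
  rw [Matrix.mul_apply] at h3
  simpa [Matrix.one_apply] using h3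

lemma uc_antisym (q : TE n) (B C : Idx n) :
    Uc g G q B C = -Uc g G q C B := upsG_swap _ q (bas B) (bas C)

lemma DT_neg (D : Idx n) (F : TE n → ℝ) (p : TE n) :
    DT D (fun q => -F q) p = -DT D F p := by
  rw [DT_eq_fderiv, DT_eq_fderiv, fderiv_fun_neg]
  rfl

lemma fderiv_const_mul_apply {F : TE n → ℝ} {p : TE n} (hF : DifferentiableAt ℝ F p)
    (c : ℝ) (z : TE n) :
    fderiv ℝ (fun q => c * F q) p z = c * fderiv ℝ F p z := by
  rw [fderiv_const_mul hF c]
  rfl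

end
end Stmt13Aux

namespace Stmt13Aux
section
variable {n : ℕ} {g ginv : Base n → Fin n → Fin n → ℝ}
  {G : Base n → Fin n → Fin n → Fin n → ℝ}

lemma sum_rot3 {M : Type*} [AddCommMonoid M] {α β γ : Type*} [Fintype α] [Fintype β]
    [Fintype γ] (f : α → β → γ → M) :
    ∑ a, ∑ b, ∑ c, f a b c = ∑ c, ∑ a, ∑ b, f a b c := by
  rw [sum_swap23, sum_swap12]

lemma upsG_expand (q : TE n) (w : Fin 2 → TE n) :
    UpsG g (linK G) q w
      = ∑ B : Idx n, ∑ C : Idx n, cmp (w 0) B * cmp (w 1) C * Uc g G q B C := by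
  have lhs_eq : UpsG g (linK G) q w
      = (∑ a, ∑ b, g q.1 a b * (w 0).2 a * (w 1).1 b)
        - (∑ a, ∑ b, ∑ c, g q.1 a b * linK G q c a * (w 0).1 c * (w 1).1 b)
        - (∑ a, ∑ b, g q.1 a b * (w 1).2 a * (w 0).1 b)
        + ∑ a, ∑ b, ∑ c, g q.1 a b * linK G q c a * (w 1).1 c * (w 0).1 b := by
    unfold UpsG
    simp only [Finset.mul_sum, Finset.sum_mul, mul_sub, sub_mul, mul_add, add_mul,
      Finset.sum_sub_distrib, Finset.sum_add_distrib, mul_zero, Finset.sum_const_zero,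
      add_zero, mul_neg, neg_mul, Finset.sum_neg_distrib]
    have h4 : ∀ A B C D : ℝ, A - B - (C - D) = A - B - C + D := fun _ _ _ _ => by ring
    rw [h4]
    congr 1
    · congr 1
      · congr 1
        · exact Finset.sum_congr rfl fun a _ => Finset.sum_congr rfl fun b _ => by ring
        · exact Finset.sum_congr rfl fun a _ => Finset.sum_congr rfl fun b _ =>
            Finset.sum_congr rfl fun c _ => by ring
      · exact Finset.sum_congr rfl fun a _ => Finset.sum_congr rfl fun b _ => by ring
    · exact Finset.sum_congr rfl fun a _ => Finset.sum_congr rfl fun b _ =>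
        Finset.sum_congr rfl fun c _ => by ring
  have split : ∑ B : Idx n, ∑ C : Idx n, cmp (w 0) B * cmp (w 1) C * Uc g G q B C
      = ((∑ a, ∑ c, (w 0).1 a * (w 1).1 c * Uc g G q (.inl a) (.inl c))
        + (∑ a, ∑ c, (w 0).1 a * (w 1).2 c * Uc g G q (.inl a) (.inr c)))
        + ((∑ a, ∑ c, (w 0).2 a * (w 1).1 c * Uc g G q (.inr a) (.inl c))
        + (∑ a, ∑ c, (w 0).2 a * (w 1).2 c * Uc g G q (.inr a) (.inr c))) := by
    rw [Fintype.sum_sum_type]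
    congr 1 <;>
    · rw [← Finset.sum_add_distrib]
      exact Finset.sum_congr rfl fun a _ => Fintype.sum_sum_type _
  have hA : ∑ a, ∑ c, (w 0).1 a * (w 1).1 c * Uc g G q (.inl a) (.inl c)
      = (∑ a, ∑ b, ∑ c, g q.1 a b * linK G q c a * (w 1).1 c * (w 0).1 b)
        - ∑ a, ∑ b, ∑ c, g q.1 a b * linK G q c a * (w 0).1 c * (w 1).1 b := by
    simp only [uc_ll]
    have e : ∀ a c, (w 0).1 a * (w 1).1 c
          * (∑ s, (g q.1 s a * linK G q c s - g q.1 s c * linK G q a s))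
        = ∑ s, ((w 0).1 a * (w 1).1 c * (g q.1 s a * linK G q c s)
            - (w 0).1 a * (w 1).1 c * (g q.1 s c * linK G q a s)) := by
      intro a c; rw [Finset.mul_sum]; exact Finset.sum_congr rfl fun s _ => by ring
    rw [Finset.sum_congr rfl fun a _ => Finset.sum_congr rfl fun c _ => e a c]
    simp only [Finset.sum_sub_distrib]
    congr 1
    · rw [sum_rot3 (fun a c s => (w 0).1 a * (w 1).1 c * (g q.1 s a * linK G q c s))]
      exact Finset.sum_congr rfl fun s _ => Finset.sum_congr rfl fun a _ =>
        Finset.sum_congr rfl fun c _ => by ring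
    · rw [sum_comm3 (fun a c s => (w 0).1 a * (w 1).1 c * (g q.1 s c * linK G q a s))]
      exact Finset.sum_congr rfl fun s _ => Finset.sum_congr rfl fun c _ =>
        Finset.sum_congr rfl fun a _ => by ring
  have hB : ∑ a, ∑ c, (w 0).1 a * (w 1).2 c * Uc g G q (.inl a) (.inr c)
      = -∑ a, ∑ b, g q.1 a b * (w 1).2 a * (w 0).1 b := by
    simp only [uc_lr]
    have hneg : -(∑ a, ∑ b, g q.1 a b * (w 1).2 a * (w 0).1 b)
        = ∑ a, ∑ b, -(g q.1 a b * (w 1).2 a * (w 0).1 b) := by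
      simp [Finset.sum_neg_distrib]
    rw [hneg, sum_swap12 (fun a c => (w 0).1 a * (w 1).2 c * (-g q.1 c a))]
    exact Finset.sum_congr rfl fun c _ => Finset.sum_congr rfl fun a _ => by ring
  have hC : ∑ a, ∑ c, (w 0).2 a * (w 1).1 c * Uc g G q (.inr a) (.inl c)
      = ∑ a, ∑ b, g q.1 a b * (w 0).2 a * (w 1).1 b := by
    simp only [uc_rl]
    exact Finset.sum_congr rfl fun a _ => Finset.sum_congr rfl fun c _ => by ring
  have hD : ∑ a, ∑ c, (w 0).2 a * (w 1).2 c * Uc g G q (.inr a) (.inr c) = 0 := by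
    simp [uc_rr]
  rw [lhs_eq, split, hA, hB, hC, hD]
  ring

/-- Coordinate components of `dΥ`. -/
noncomputable def dU (g : Base n → Fin n → Fin n → ℝ)
    (G : Base n → Fin n → Fin n → Fin n → ℝ) (p : TE n) (D E F : Idx n) : ℝ :=
  DT D (fun q => Uc g G q E F) p - DT E (fun q => Uc g G q D F) p
    + DT F (fun q => Uc g G q D E) p

lemma extd_ups_expand (hg : ∀ a b, ContDiff ℝ (⊤ : ℕ∞) (fun x => g x a b))
    (hG : ∀ a b d, ContDiff ℝ (⊤ : ℕ∞) (fun x => G x a b d)) (p : TE n) (v : Fin 3 → TE n) :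
    extd (UpsG g (linK G)) p v
      = ∑ D : Idx n, ∑ E : Idx n, ∑ F : Idx n,
          cmp (v 0) D * cmp (v 1) E * cmp (v 2) F * dU g G p D E F := by
  have hUc : ∀ B C, DifferentiableAt ℝ (fun q => Uc g G q B C) p :=
    fun B C => dAt (smUc hg hG B C) p
  have hderiv : ∀ (u0 u1 z : TE n),
      fderiv ℝ (fun q => ∑ B : Idx n, ∑ C : Idx n,
          cmp u0 B * cmp u1 C * Uc g G q B C) p z
        = ∑ B : Idx n, ∑ C : Idx n, cmp u0 B * cmp u1 C
            * ∑ D : Idx n, cmp z D * DT D (fun q => Uc g G q B C) p := by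
    intro u0 u1 z
    rw [fderiv_sum_apply' _ (fun B _ => DifferentiableAt.fun_sum fun C _ =>
      (hUc B C).const_mul _) z]
    refine Finset.sum_congr rfl fun B _ => ?_
    rw [fderiv_sum_apply' _ (fun C _ => (hUc B C).const_mul _) z]
    refine Finset.sum_congr rfl fun C _ => ?_
    rw [fderiv_const_mul_apply (hUc B C) _ z, fderiv_expand (hUc B C) z]
  show ∑ i : Fin 3, (-1:ℝ)^(i:ℕ)
      * fderiv ℝ (fun q => UpsG g (linK G) q (v ∘ i.succAbove)) p (v i) = _
  rw [Fin.sum_univ_three]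
  have sa0 : ∀ j : Fin 2, (v ∘ (0:Fin 3).succAbove) j = ![v 1, v 2] j := by
    intro j; fin_cases j <;> (simp only [Function.comp_apply]; congr 1 <;> decide)
  have sa1 : ∀ j : Fin 2, (v ∘ (1:Fin 3).succAbove) j = ![v 0, v 2] j := by
    intro j; fin_cases j <;> (simp only [Function.comp_apply]; congr 1 <;> decide)
  have sa2 : ∀ j : Fin 2, (v ∘ (2:Fin 3).succAbove) j = ![v 0, v 1] j := by
    intro j; fin_cases j <;> (simp only [Function.comp_apply]; congr 1 <;> decide)
  have e0 : (fun q => UpsG g (linK G) q (v ∘ (0:Fin 3).succAbove))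
      = fun q => ∑ B : Idx n, ∑ C : Idx n, cmp (v 1) B * cmp (v 2) C * Uc g G q B C := by
    funext q
    rw [show (v ∘ (0:Fin 3).succAbove) = ![v 1, v 2] from funext sa0, upsG_expand]
    rfl
  have e1 : (fun q => UpsG g (linK G) q (v ∘ (1:Fin 3).succAbove))
      = fun q => ∑ B : Idx n, ∑ C : Idx n, cmp (v 0) B * cmp (v 2) C * Uc g G q B C := by
    funext q
    rw [show (v ∘ (1:Fin 3).succAbove) = ![v 0, v 2] from funext sa1, upsG_expand]
    rfl
  have e2 : (fun q => UpsG g (linK G) q (v ∘ (2:Fin 3).succAbove))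
      = fun q => ∑ B : Idx n, ∑ C : Idx n, cmp (v 0) B * cmp (v 1) C * Uc g G q B C := by
    funext q
    rw [show (v ∘ (2:Fin 3).succAbove) = ![v 0, v 1] from funext sa2, upsG_expand]
    rfl
  rw [e0, e1, e2, hderiv (v 1) (v 2) (v 0), hderiv (v 0) (v 2) (v 1),
    hderiv (v 0) (v 1) (v 2)]
  have rhs_split : ∑ D : Idx n, ∑ E : Idx n, ∑ F : Idx n,
        cmp (v 0) D * cmp (v 1) E * cmp (v 2) F * dU g G p D E F
      = ((∑ D : Idx n, ∑ E : Idx n, ∑ F : Idx n, cmp (v 0) D * cmp (v 1) E * cmp (v 2) F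
            * DT D (fun q => Uc g G q E F) p)
        - ∑ D : Idx n, ∑ E : Idx n, ∑ F : Idx n, cmp (v 0) D * cmp (v 1) E * cmp (v 2) F
            * DT E (fun q => Uc g G q D F) p)
        + ∑ D : Idx n, ∑ E : Idx n, ∑ F : Idx n, cmp (v 0) D * cmp (v 1) E * cmp (v 2) F
            * DT F (fun q => Uc g G q D E) p := by
    unfold dU
    simp only [mul_sub, mul_add, Finset.sum_sub_distrib, Finset.sum_add_distrib]
  have t0 : ∑ B : Idx n, ∑ C : Idx n, cmp (v 1) B * cmp (v 2) C
        * ∑ D : Idx n, cmp (v 0) D * DT D (fun q => Uc g G q B C) p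
      = ∑ D : Idx n, ∑ E : Idx n, ∑ F : Idx n, cmp (v 0) D * cmp (v 1) E * cmp (v 2) F
          * DT D (fun q => Uc g G q E F) p := by
    have e : ∀ B C, cmp (v 1) B * cmp (v 2) C
          * ∑ D : Idx n, cmp (v 0) D * DT D (fun q => Uc g G q B C) p
        = ∑ D : Idx n, cmp (v 1) B * cmp (v 2) C
            * (cmp (v 0) D * DT D (fun q => Uc g G q B C) p) := fun B C =>
      Finset.mul_sum _ _ _
    rw [Finset.sum_congr rfl fun B _ => Finset.sum_congr rfl fun C _ => e B C,
      sum_rot3 (fun B C D => cmp (v 1) B * cmp (v 2) C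
        * (cmp (v 0) D * DT D (fun q => Uc g G q B C) p))]
    exact Finset.sum_congr rfl fun D _ => Finset.sum_congr rfl fun B _ =>
      Finset.sum_congr rfl fun C _ => by ring
  have t1 : ∑ B : Idx n, ∑ C : Idx n, cmp (v 0) B * cmp (v 2) C
        * ∑ E : Idx n, cmp (v 1) E * DT E (fun q => Uc g G q B C) p
      = ∑ D : Idx n, ∑ E : Idx n, ∑ F : Idx n, cmp (v 0) D * cmp (v 1) E * cmp (v 2) F
          * DT E (fun q => Uc g G q D F) p := by
    have e : ∀ B C, cmp (v 0) B * cmp (v 2) C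
          * ∑ E : Idx n, cmp (v 1) E * DT E (fun q => Uc g G q B C) p
        = ∑ E : Idx n, cmp (v 0) B * cmp (v 2) C
            * (cmp (v 1) E * DT E (fun q => Uc g G q B C) p) := fun B C =>
      Finset.mul_sum _ _ _
    rw [Finset.sum_congr rfl fun B _ => Finset.sum_congr rfl fun C _ => e B C,
      sum_swap23 (fun B C E => cmp (v 0) B * cmp (v 2) C
        * (cmp (v 1) E * DT E (fun q => Uc g G q B C) p))]
    exact Finset.sum_congr rfl fun D _ => Finset.sum_congr rfl fun E _ =>
      Finset.sum_congr rfl fun F _ => by ring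
  have t2 : ∑ B : Idx n, ∑ C : Idx n, cmp (v 0) B * cmp (v 1) C
        * ∑ F : Idx n, cmp (v 2) F * DT F (fun q => Uc g G q B C) p
      = ∑ D : Idx n, ∑ E : Idx n, ∑ F : Idx n, cmp (v 0) D * cmp (v 1) E * cmp (v 2) F
          * DT F (fun q => Uc g G q D E) p := by
    have e : ∀ B C, cmp (v 0) B * cmp (v 1) C
          * ∑ F : Idx n, cmp (v 2) F * DT F (fun q => Uc g G q B C) p
        = ∑ F : Idx n, cmp (v 0) B * cmp (v 1) C
            * (cmp (v 2) F * DT F (fun q => Uc g G q B C) p) := fun B C =>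
      Finset.mul_sum _ _ _
    rw [Finset.sum_congr rfl fun B _ => Finset.sum_congr rfl fun C _ => e B C]
    exact Finset.sum_congr rfl fun D _ => Finset.sum_congr rfl fun E _ =>
      Finset.sum_congr rfl fun F _ => by ring
  rw [rhs_split, ← t0, ← t1, ← t2]
  norm_num
  ring

/-- `dΥ = 0` iff all its coordinate components vanish. -/
lemma extd_ups_iff_dU (hg : ∀ a b, ContDiff ℝ (⊤ : ℕ∞) (fun x => g x a b))
    (hG : ∀ a b d, ContDiff ℝ (⊤ : ℕ∞) (fun x => G x a b d)) :
    (∀ p (v : Fin 3 → TE n), extd (UpsG g (linK G)) p v = 0)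
      ↔ ∀ p (D E F : Idx n), dU g G p D E F = 0 := by
  constructor
  · intro h p D E F
    have h0 := h p ![bas D, bas E, bas F]
    rw [extd_ups_expand hg hG] at h0
    simpa [cmp_bas, ite_mul, mul_ite, Finset.sum_ite_eq, Finset.sum_ite_eq'] using h0
  · intro h p v
    rw [extd_ups_expand hg hG]
    simp [h p]

end
end Stmt13Aux

namespace Stmt13Aux
section
variable {n : ℕ} {g ginv : Base n → Fin n → Fin n → ℝ}
  {G : Base n → Fin n → Fin n → Fin n → ℝ}

lemma mul_neg_sum2 (r : ℝ) (f : Idx n → Idx n → ℝ) :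
    r * -(∑ a : Idx n, ∑ b : Idx n, f a b) = ∑ a : Idx n, ∑ b : Idx n, -(r * f a b) := by
  rw [mul_neg, Finset.mul_sum, ← Finset.sum_neg_distrib]
  exact Finset.sum_congr rfl fun a _ => by
    rw [Finset.mul_sum, ← Finset.sum_neg_distrib]

lemma neg_sum3 (f : Idx n → Idx n → Idx n → ℝ) :
    -(∑ a : Idx n, ∑ b : Idx n, ∑ c : Idx n, f a b c)
      = ∑ a : Idx n, ∑ b : Idx n, ∑ c : Idx n, -(f a b c) := by
  rw [← Finset.sum_neg_distrib]
  refine Finset.sum_congr rfl fun a _ => ?_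
  rw [← Finset.sum_neg_distrib]
  refine Finset.sum_congr rfl fun b _ => ?_
  rw [← Finset.sum_neg_distrib]

lemma D1 (hgsym : ∀ x a b, g x a b = g x b a)
    (hinv : ∀ x a b, ∑ c, ginv x a c * g x c b = if a = b then (1:ℝ) else 0)
    (hinv' : ∀ x a b, ∑ c, g x a c * ginv x c b = if a = b then (1:ℝ) else 0)
    (hg : ∀ a b, ContDiff ℝ (⊤ : ℕ∞) (fun x => g x a b))
    (hginv : ∀ a b, ContDiff ℝ (⊤ : ℕ∞) (fun x => ginv x a b))
    (hG : ∀ a b d, ContDiff ℝ (⊤ : ℕ∞) (fun x => G x a b d))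
    (p : TE n) (D A C : Idx n) :
    ∑ B : Idx n, (Lam ginv (linK G) p A B * DT D (fun q => Uc g G q B C) p
      + Uc g G p B C * DT D (fun q => Lam ginv (linK G) q A B) p) = 0 := by
  have hconst : (fun q => ∑ B : Idx n, Lam ginv (linK G) q A B * Uc g G q B C)
      = fun _ => (if A = C then (1:ℝ) else 0) :=
    funext fun q => lamUc_inv hgsym hinv hinv' q A C
  have h0 : DT D (fun q => ∑ B : Idx n, Lam ginv (linK G) q A B * Uc g G q B C) p = 0 := by
    rw [hconst, DT_const]
  rw [DT_sum _ D (fun B _ =>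
    (dAt (smLam hginv hG A B) p).fun_mul (dAt (smUc hg hG B C) p))] at h0
  rw [← h0]
  exact Finset.sum_congr rfl fun B _ => by
    rw [DT_mul D (dAt (smLam hginv hG A B) p) (dAt (smUc hg hG B C) p)]; try ring

lemma D2 (hgsym : ∀ x a b, g x a b = g x b a)
    (hinv : ∀ x a b, ∑ c, ginv x a c * g x c b = if a = b then (1:ℝ) else 0)
    (hinv' : ∀ x a b, ∑ c, g x a c * ginv x c b = if a = b then (1:ℝ) else 0)
    (hg : ∀ a b, ContDiff ℝ (⊤ : ℕ∞) (fun x => g x a b))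
    (hginv : ∀ a b, ContDiff ℝ (⊤ : ℕ∞) (fun x => ginv x a b))
    (hG : ∀ a b d, ContDiff ℝ (⊤ : ℕ∞) (fun x => G x a b d))
    (p : TE n) (D A C : Idx n) :
    DT D (fun q => Lam ginv (linK G) q A C) p
      = -∑ E : Idx n, ∑ F : Idx n, Lam ginv (linK G) p A E
          * DT D (fun q => Uc g G q E F) p * Lam ginv (linK G) p F C := by
  have h1 : ∀ F' : Idx n, ∑ B : Idx n,
      (Lam ginv (linK G) p A B * DT D (fun q => Uc g G q B F') p
        + Uc g G p B F' * DT D (fun q => Lam ginv (linK G) q A B) p) = 0 :=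
    fun F' => D1 hgsym hinv hinv' hg hginv hG p D A F'
  have h2 : ∑ F' : Idx n, (∑ B : Idx n,
      (Lam ginv (linK G) p A B * DT D (fun q => Uc g G q B F') p
        + Uc g G p B F' * DT D (fun q => Lam ginv (linK G) q A B) p))
          * Lam ginv (linK G) p F' C = 0 := by
    simp [h1]
  have h3 : ∑ F' : Idx n, (∑ B : Idx n,
      (Lam ginv (linK G) p A B * DT D (fun q => Uc g G q B F') p
        + Uc g G p B F' * DT D (fun q => Lam ginv (linK G) q A B) p))
          * Lam ginv (linK G) p F' C
      = (∑ F' : Idx n, ∑ B : Idx n, Lam ginv (linK G) p A B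
            * DT D (fun q => Uc g G q B F') p * Lam ginv (linK G) p F' C)
        + ∑ B : Idx n, DT D (fun q => Lam ginv (linK G) q A B) p
            * ∑ F' : Idx n, Uc g G p B F' * Lam ginv (linK G) p F' C := by
    have e : ∀ F', (∑ B : Idx n,
        (Lam ginv (linK G) p A B * DT D (fun q => Uc g G q B F') p
          + Uc g G p B F' * DT D (fun q => Lam ginv (linK G) q A B) p))
            * Lam ginv (linK G) p F' C
        = ∑ B : Idx n, (Lam ginv (linK G) p A B * DT D (fun q => Uc g G q B F') p
              * Lam ginv (linK G) p F' C
            + Uc g G p B F' * DT D (fun q => Lam ginv (linK G) q A B) p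
              * Lam ginv (linK G) p F' C) := by
      intro F'; rw [Finset.sum_mul]
      exact Finset.sum_congr rfl fun B _ => by ring
    rw [Finset.sum_congr rfl fun F' _ => e F']
    simp only [Finset.sum_add_distrib]
    congr 1
    rw [sum_swap12]
    refine Finset.sum_congr rfl fun B _ => ?_
    rw [Finset.mul_sum]
    exact Finset.sum_congr rfl fun F' _ => by ring
  rw [h3] at h2
  have h4 : ∑ B : Idx n, DT D (fun q => Lam ginv (linK G) q A B) p
      * ∑ F' : Idx n, Uc g G p B F' * Lam ginv (linK G) p F' C
      = DT D (fun q => Lam ginv (linK G) q A C) p := by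
    have e : ∀ B, (∑ F' : Idx n, Uc g G p B F' * Lam ginv (linK G) p F' C)
        = if B = C then (1:ℝ) else 0 := fun B => ucLam_inv hgsym hinv hinv' p B C
    simp only [e]
    simp [mul_ite, Finset.sum_ite_eq, Finset.sum_ite_eq']
  rw [h4] at h2
  have h5 : ∑ F' : Idx n, ∑ B : Idx n, Lam ginv (linK G) p A B
        * DT D (fun q => Uc g G q B F') p * Lam ginv (linK G) p F' C
      = ∑ E : Idx n, ∑ F : Idx n, Lam ginv (linK G) p A E
          * DT D (fun q => Uc g G q E F) p * Lam ginv (linK G) p F C := sum_swap12 _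
  rw [h5] at h2
  linarith [h2]

lemma SB_eq (hgsym : ∀ x a b, g x a b = g x b a)
    (hinv : ∀ x a b, ∑ c, ginv x a c * g x c b = if a = b then (1:ℝ) else 0)
    (hinv' : ∀ x a b, ∑ c, g x a c * ginv x c b = if a = b then (1:ℝ) else 0)
    (hg : ∀ a b, ContDiff ℝ (⊤ : ℕ∞) (fun x => g x a b))
    (hginv : ∀ a b, ContDiff ℝ (⊤ : ℕ∞) (fun x => ginv x a b))
    (hG : ∀ a b d, ContDiff ℝ (⊤ : ℕ∞) (fun x => G x a b d))
    (p : TE n) (A B C : Idx n) :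
    SB (Lam ginv (linK G)) p A B C
      = 2 * ∑ D : Idx n, ∑ E : Idx n, ∑ F : Idx n,
          Lam ginv (linK G) p D A * Lam ginv (linK G) p E B * Lam ginv (linK G) p F C
            * dU g G p D E F := by
  have hD2 : ∀ (D X Y : Idx n), DT D (fun q => Lam ginv (linK G) q X Y) p
      = -∑ E : Idx n, ∑ F : Idx n, Lam ginv (linK G) p X E
          * DT D (fun q => Uc g G q E F) p * Lam ginv (linK G) p F Y :=
    fun D X Y => D2 hgsym hinv hinv' hg hginv hG p D X Y
  have hf3 : ∀ (D E F : Idx n), DT D (fun q => Uc g G q E F) p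
      = -DT D (fun q => Uc g G q F E) p := by
    intro D E F
    rw [show (fun q => Uc g G q E F) = fun q => -(Uc g G q F E) from
      funext fun q => uc_antisym q E F, DT_neg]
  have hanti : ∀ (X Y : Idx n), Lam ginv (linK G) p X Y = -Lam ginv (linK G) p Y X :=
    fun X Y => lam_antisym p X Y
  have split : ∑ D : Idx n, ∑ E : Idx n, ∑ F : Idx n,
        Lam ginv (linK G) p D A * Lam ginv (linK G) p E B * Lam ginv (linK G) p F C
          * dU g G p D E F
      = ((∑ D : Idx n, ∑ E : Idx n, ∑ F : Idx n,
            Lam ginv (linK G) p D A * Lam ginv (linK G) p E B * Lam ginv (linK G) p F C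
              * DT D (fun q => Uc g G q E F) p)
        - ∑ D : Idx n, ∑ E : Idx n, ∑ F : Idx n,
            Lam ginv (linK G) p D A * Lam ginv (linK G) p E B * Lam ginv (linK G) p F C
              * DT E (fun q => Uc g G q D F) p)
        + ∑ D : Idx n, ∑ E : Idx n, ∑ F : Idx n,
            Lam ginv (linK G) p D A * Lam ginv (linK G) p E B * Lam ginv (linK G) p F C
              * DT F (fun q => Uc g G q D E) p := by
    unfold dU
    simp only [mul_sub, mul_add, Finset.sum_sub_distrib, Finset.sum_add_distrib]
  have c1 : ∑ D : Idx n, Lam ginv (linK G) p D A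
        * DT D (fun q => Lam ginv (linK G) q B C) p
      = ∑ D : Idx n, ∑ E : Idx n, ∑ F : Idx n,
          Lam ginv (linK G) p D A * Lam ginv (linK G) p E B * Lam ginv (linK G) p F C
            * DT D (fun q => Uc g G q E F) p := by
    simp only [hD2]
    rw [Finset.sum_congr rfl fun D _ => mul_neg_sum2 _ _]
    exact Finset.sum_congr rfl fun D _ => Finset.sum_congr rfl fun E _ =>
      Finset.sum_congr rfl fun F _ => by rw [hanti E B]; ring
  have c2 : ∑ D : Idx n, Lam ginv (linK G) p D B
        * DT D (fun q => Lam ginv (linK G) q C A) p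
      = -∑ D : Idx n, ∑ E : Idx n, ∑ F : Idx n,
          Lam ginv (linK G) p D A * Lam ginv (linK G) p E B * Lam ginv (linK G) p F C
            * DT E (fun q => Uc g G q D F) p := by
    simp only [hD2]
    rw [Finset.sum_congr rfl fun D _ => mul_neg_sum2 _ _]
    rw [show (∑ D : Idx n, ∑ E : Idx n, ∑ F : Idx n,
        Lam ginv (linK G) p D A * Lam ginv (linK G) p E B * Lam ginv (linK G) p F C
          * DT E (fun q => Uc g G q D F) p)
        = ∑ E : Idx n, ∑ D : Idx n, ∑ F : Idx n,
          Lam ginv (linK G) p D A * Lam ginv (linK G) p E B * Lam ginv (linK G) p F C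
            * DT E (fun q => Uc g G q D F) p from sum_swap12 _]
    rw [neg_sum3]
    rw [sum_swap23 (fun D E F => -(Lam ginv (linK G) p D B
      * (Lam ginv (linK G) p C E * DT D (fun q => Uc g G q E F) p
        * Lam ginv (linK G) p F A)))]
    refine Finset.sum_congr rfl fun D _ => Finset.sum_congr rfl fun E _ =>
      Finset.sum_congr rfl fun F _ => ?_
    rw [hf3 D F E, hanti C F]
    ring
  have c3 : ∑ D : Idx n, Lam ginv (linK G) p D C
        * DT D (fun q => Lam ginv (linK G) q A B) p
      = ∑ D : Idx n, ∑ E : Idx n, ∑ F : Idx n,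
          Lam ginv (linK G) p D A * Lam ginv (linK G) p E B * Lam ginv (linK G) p F C
            * DT F (fun q => Uc g G q D E) p := by
    simp only [hD2]
    rw [Finset.sum_congr rfl fun D _ => mul_neg_sum2 _ _]
    rw [show (∑ D : Idx n, ∑ E : Idx n, ∑ F : Idx n,
        Lam ginv (linK G) p D A * Lam ginv (linK G) p E B * Lam ginv (linK G) p F C
          * DT F (fun q => Uc g G q D E) p)
        = ∑ F : Idx n, ∑ D : Idx n, ∑ E : Idx n,
          Lam ginv (linK G) p D A * Lam ginv (linK G) p E B * Lam ginv (linK G) p F C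
            * DT F (fun q => Uc g G q D E) p from sum_rot3 _]
    refine Finset.sum_congr rfl fun D _ => Finset.sum_congr rfl fun E _ =>
      Finset.sum_congr rfl fun F _ => ?_
    rw [hanti A E]
    ring
  show 2 * ∑ D : Idx n,
      (Lam ginv (linK G) p D A * DT D (fun q => Lam ginv (linK G) q B C) p
        + Lam ginv (linK G) p D B * DT D (fun q => Lam ginv (linK G) q C A) p
        + Lam ginv (linK G) p D C * DT D (fun q => Lam ginv (linK G) q A B) p) = _
  congr 1
  rw [split]
  simp only [Finset.sum_add_distrib]
  rw [c1, c2, c3]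
  ring

lemma contract_one (L U : Idx n → Idx n → ℝ)
    (hLU : ∀ X Y, ∑ A : Idx n, L X A * U A Y = if X = Y then (1:ℝ) else 0)
    (T : Idx n → ℝ) (Y : Idx n) :
    ∑ A : Idx n, (∑ X : Idx n, L X A * T X) * U A Y = T Y := by
  have e1 : ∀ A, (∑ X : Idx n, L X A * T X) * U A Y
      = ∑ X : Idx n, T X * (L X A * U A Y) := by
    intro A; rw [Finset.sum_mul]
    exact Finset.sum_congr rfl fun X _ => by ring
  rw [Finset.sum_congr rfl fun A _ => e1 A, sum_swap12]
  have e2 : ∀ X, ∑ A : Idx n, T X * (L X A * U A Y)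
      = T X * (if X = Y then (1:ℝ) else 0) := by
    intro X; rw [← Finset.mul_sum, hLU]
  rw [Finset.sum_congr rfl fun X _ => e2 X]
  simp [mul_ite, Finset.sum_ite_eq, Finset.sum_ite_eq']

lemma zero_of_contract (L U : Idx n → Idx n → ℝ)
    (hLU : ∀ X Y, ∑ A : Idx n, L X A * U A Y = if X = Y then (1:ℝ) else 0)
    (T : Idx n → ℝ) (hT : ∀ A, ∑ X : Idx n, L X A * T X = 0) : ∀ Y, T Y = 0 := by
  intro Y
  rw [← contract_one L U hLU T Y]
  simp [hT]

/-- Part 3 of the theorem. -/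
lemma part3 (hgsym : ∀ x a b, g x a b = g x b a)
    (hinv : ∀ x a b, ∑ c, ginv x a c * g x c b = if a = b then (1:ℝ) else 0)
    (hinv' : ∀ x a b, ∑ c, g x a c * ginv x c b = if a = b then (1:ℝ) else 0)
    (hg : ∀ a b, ContDiff ℝ (⊤ : ℕ∞) (fun x => g x a b))
    (hginv : ∀ a b, ContDiff ℝ (⊤ : ℕ∞) (fun x => ginv x a b))
    (hG : ∀ a b d, ContDiff ℝ (⊤ : ℕ∞) (fun x => G x a b d)) :
    (∀ p (v : Fin 3 → TE n), extd (UpsG g (linK G)) p v = 0)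
      ↔ (∀ p (A B C : Idx n), SB (Lam ginv (linK G)) p A B C = 0) := by
  rw [extd_ups_iff_dU hg hG]
  constructor
  · intro h p A B C
    rw [SB_eq hgsym hinv hinv' hg hginv hG p A B C]
    simp [h p]
  · intro h p
    have hLU : ∀ X Y, ∑ A : Idx n, Lam ginv (linK G) p X A * Uc g G p A Y
        = if X = Y then (1:ℝ) else 0 := fun X Y => lamUc_inv hgsym hinv hinv' p X Y
    have hG0 : ∀ A B C : Idx n, ∑ D : Idx n, ∑ E : Idx n, ∑ F : Idx n,
        Lam ginv (linK G) p D A * Lam ginv (linK G) p E B * Lam ginv (linK G) p F C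
          * dU g G p D E F = 0 := by
      intro A B C
      have h1 := SB_eq hgsym hinv hinv' hg hginv hG p A B C
      rw [h p A B C] at h1
      linarith
    have hstep1 : ∀ (B C D' : Idx n), ∑ E : Idx n, ∑ F : Idx n,
        Lam ginv (linK G) p E B * Lam ginv (linK G) p F C * dU g G p D' E F = 0 := by
      intro B C
      refine zero_of_contract (fun X A => Lam ginv (linK G) p X A)
        (fun A Y => Uc g G p A Y) hLU _ (fun A => ?_)
      rw [show (∑ X : Idx n, Lam ginv (linK G) p X A
          * ∑ E : Idx n, ∑ F : Idx n, Lam ginv (linK G) p E B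
            * Lam ginv (linK G) p F C * dU g G p X E F)
          = ∑ D : Idx n, ∑ E : Idx n, ∑ F : Idx n,
            Lam ginv (linK G) p D A * Lam ginv (linK G) p E B
              * Lam ginv (linK G) p F C * dU g G p D E F from ?_]
      · exact hG0 A B C
      · refine Finset.sum_congr rfl fun D _ => ?_
        rw [Finset.mul_sum]
        refine Finset.sum_congr rfl fun E _ => ?_
        rw [Finset.mul_sum]
        exact Finset.sum_congr rfl fun F _ => by ring
    have hstep2 : ∀ (C D' E' : Idx n), ∑ F : Idx n,
        Lam ginv (linK G) p F C * dU g G p D' E' F = 0 := by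
      intro C D'
      refine zero_of_contract (fun X A => Lam ginv (linK G) p X A)
        (fun A Y => Uc g G p A Y) hLU _ (fun A => ?_)
      rw [show (∑ X : Idx n, Lam ginv (linK G) p X A
          * ∑ F : Idx n, Lam ginv (linK G) p F C * dU g G p D' X F)
          = ∑ E : Idx n, ∑ F : Idx n, Lam ginv (linK G) p E A
            * Lam ginv (linK G) p F C * dU g G p D' E F from ?_]
      · exact hstep1 A C D'
      · refine Finset.sum_congr rfl fun E _ => ?_
        rw [Finset.mul_sum]
        exact Finset.sum_congr rfl fun F _ => by ring
    intro D E F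
    have hstep3 : ∀ (D' E' : Idx n), ∀ Y, dU g G p D' E' Y = 0 := by
      intro D' E'
      refine zero_of_contract (fun X A => Lam ginv (linK G) p X A)
        (fun A Y => Uc g G p A Y) hLU _ (fun A => ?_)
      exact hstep2 A D' E'
    exact hstep3 D E F
end
end Stmt13Aux
/-- Let `K` be a linear connection on `TE → E` (Christoffel symbols
`G_a^s{}_e(x)`) and `g` a pseudo-Riemannian metric.  Then the following are
equivalent: (1) `L[K] g♭ = 0`; (2) `d_K g = 0` (components
`∂_a g_{eb} + g_{sb} G_a^s{}_e` antisymmetrized in `a,b`); (3) `dΥ[g,K] = 0`;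
(4) `[Λ[g,K], Λ[g,K]] = 0` (Schouten bracket). -/
theorem stmt13 (n : ℕ) (g ginv : Base n → Fin n → Fin n → ℝ)
    (G : Base n → Fin n → Fin n → Fin n → ℝ)
    (hg : ∀ a b, ContDiff ℝ (⊤ : ℕ∞) (fun x => g x a b))
    (hginv : ∀ a b, ContDiff ℝ (⊤ : ℕ∞) (fun x => ginv x a b))
    (hgsym : ∀ x a b, g x a b = g x b a)
    (hinv : ∀ x a b, ∑ c, ginv x a c * g x c b = if a = b then (1:ℝ) else 0)
    (hinv' : ∀ x a b, ∑ c, g x a c * ginv x c b = if a = b then (1:ℝ) else 0)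
    (hG : ∀ a b d, ContDiff ℝ (⊤ : ℕ∞) (fun x => G x a b d)) :
    ((∀ p (v : Fin 2 → TE n), lieK (horK (linK G)) (gflat g) p v = 0)
      ↔ (∀ x e a b,
          pdB (fun y => g y e b) a x + ∑ s, g x s b * G x a s e
            = pdB (fun y => g y e a) b x + ∑ s, g x s a * G x b s e))
    ∧ ((∀ x e a b,
          pdB (fun y => g y e b) a x + ∑ s, g x s b * G x a s e
            = pdB (fun y => g y e a) b x + ∑ s, g x s a * G x b s e)
        ↔ (∀ p (v : Fin 3 → TE n), extd (UpsG g (linK G)) p v = 0))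
    ∧ ((∀ p (v : Fin 3 → TE n), extd (UpsG g (linK G)) p v = 0)
        ↔ (∀ p (A B C : Idx n), SB (Lam ginv (linK G)) p A B C = 0)) := by
  exact ⟨Stmt13Aux.part1 hg,
    ⟨fun hC => Stmt13Aux.part2a hg hC, fun h => Stmt13Aux.part2b hg hG h⟩,
    Stmt13Aux.part3 hgsym hinv hinv' hg hginv hG⟩
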